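/- arXiv:2202.01835 — 8 statements merged into one kernel-verified Lean document; each statement's English description precedes it below -/
import Mathlib

section
/- For a ≥ 0, b > −1 and θ ∈ [0,1], there exist constants c₂ > c₁ > 0 (depending only on a, b) such that c₁·θ^{3+2b} ≤ Φ_{a,b}(θ) ≤ c₂·θ^{3+2b}, where Φ_{a,b}(θ) = ∫₀^θ ξ²·(√(1+ξ²))^a · (θ²−ξ²)^b / (√(1+θ²)+√(1+ξ²))^b dξ. -/
open MeasureTheory intervalIntegral Set

/-- `Φ_{a,b}(θ) = ∫₀^θ ξ² (√(1+ξ²))^a (θ²−ξ²)^b (√(1+θ²)+√(1+ξ²))^{−b} dξ`. -/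
noncomputable def PhiAB (a b θ : ℝ) : ℝ :=
  ∫ ξ in (0:ℝ)..θ, ξ ^ 2 * Real.sqrt (1 + ξ ^ 2) ^ a * (θ ^ 2 - ξ ^ 2) ^ b
    / (Real.sqrt (1 + θ ^ 2) + Real.sqrt (1 + ξ ^ 2)) ^ b

lemma hInt (b : ℝ) (hb : -1 < b) (θ : ℝ) (hθ : 0 < θ) :
    IntervalIntegrable (fun ξ => ξ ^ 2 * (θ ^ 2 - ξ ^ 2) ^ b) volume 0 θ := by
  have base : IntervalIntegrable (fun x : ℝ => (θ - x) ^ b) volume 0 θ := by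
    have := (intervalIntegrable_rpow' (a := 0) (b := θ) hb).comp_sub_left θ
    simpa using this.symm
  refine (base.const_mul (θ ^ 2 * max (θ ^ b) ((2 * θ) ^ b))).mono_fun ?_ ?_
  · apply Measurable.aestronglyMeasurable; fun_prop
  · filter_upwards [ae_restrict_mem measurableSet_uIoc] with x hx
    rw [Set.uIoc_of_le hθ.le] at hx
    obtain ⟨hx0, hxθ⟩ := hx
    have hθx : 0 ≤ θ - x := by linarith
    have h1 : (θ ^ 2 - x ^ 2 : ℝ) = (θ + x) * (θ - x) := by ring
    have h2 : ((θ + x) * (θ - x)) ^ b = (θ + x) ^ b * (θ - x) ^ b :=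
      Real.mul_rpow (by linarith) hθx
    have h3 : (θ + x) ^ b ≤ max (θ ^ b) ((2 * θ) ^ b) := by
      rcases le_or_gt 0 b with hb0 | hb0
      · exact le_max_of_le_right (Real.rpow_le_rpow (by linarith) (by linarith) hb0)
      · exact le_max_of_le_left (Real.rpow_le_rpow_of_nonpos hθ (by linarith) hb0.le)
    have hx2 : x ^ 2 ≤ θ ^ 2 := by nlinarith
    have hnn : (0:ℝ) ≤ (θ - x) ^ b := Real.rpow_nonneg hθx b
    have hnn' : (0:ℝ) ≤ (θ + x) ^ b := Real.rpow_nonneg (by linarith) b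
    have key : x ^ 2 * (θ ^ 2 - x ^ 2) ^ b
        ≤ θ ^ 2 * max (θ ^ b) ((2 * θ) ^ b) * (θ - x) ^ b := by
      rw [h1, h2]
      calc x ^ 2 * ((θ + x) ^ b * (θ - x) ^ b)
          ≤ θ ^ 2 * (max (θ ^ b) ((2 * θ) ^ b) * (θ - x) ^ b) := by
            apply mul_le_mul hx2 (mul_le_mul_of_nonneg_right h3 hnn)
              (mul_nonneg hnn' hnn) (by positivity)
        _ = θ ^ 2 * max (θ ^ b) ((2 * θ) ^ b) * (θ - x) ^ b := by ring
    have hLnn : (0:ℝ) ≤ x ^ 2 * (θ ^ 2 - x ^ 2) ^ b :=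
      mul_nonneg (by positivity) (Real.rpow_nonneg (by nlinarith) b)
    have hCnn : (0:ℝ) ≤ θ ^ 2 * max (θ ^ b) ((2 * θ) ^ b) * (θ - x) ^ b := by
      apply mul_nonneg _ hnn
      have : (0:ℝ) < θ ^ b := Real.rpow_pos_of_pos hθ b
      have := le_max_left (θ ^ b) ((2*θ) ^ b)
      nlinarith
    rw [Real.norm_eq_abs, Real.norm_eq_abs, abs_of_nonneg hLnn, abs_of_nonneg hCnn]
    exact key

lemma hVal (b : ℝ) (θ : ℝ) (hθ : 0 < θ) :
    ∫ ξ in (0:ℝ)..θ, ξ ^ 2 * (θ ^ 2 - ξ ^ 2) ^ b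
      = θ ^ (3 + 2 * b) * ∫ t in (0:ℝ)..1, t ^ 2 * (1 - t ^ 2) ^ b := by
  have hsc := intervalIntegral.smul_integral_comp_mul_left (a := 0) (b := 1)
    (fun ξ => ξ ^ 2 * (θ ^ 2 - ξ ^ 2) ^ b) θ
  simp only [mul_zero, mul_one, smul_eq_mul] at hsc
  rw [← hsc]
  have h5 : θ ^ ((2:ℝ)) = θ ^ (2:ℕ) := by
    rw [← Real.rpow_natCast θ 2]; norm_num
  have hcong : ∀ t ∈ Set.uIcc (0:ℝ) 1,
      (θ * t) ^ 2 * (θ ^ 2 - (θ * t) ^ 2) ^ b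
        = θ ^ ((2:ℝ) + 2 * b) * (t ^ 2 * (1 - t ^ 2) ^ b) := by
    intro t ht
    rw [Set.uIcc_of_le (by norm_num)] at ht
    obtain ⟨ht0, ht1⟩ := ht
    have h1 : θ ^ 2 - (θ * t) ^ 2 = θ ^ 2 * (1 - t ^ 2) := by ring
    have h2 : (θ ^ 2 * (1 - t ^ 2)) ^ b = (θ ^ 2) ^ b * (1 - t ^ 2) ^ b :=
      Real.mul_rpow (by positivity) (by nlinarith)
    have h3 : ((θ:ℝ) ^ 2) ^ b = θ ^ (2 * b) := by
      rw [← Real.rpow_natCast θ 2, ← Real.rpow_mul hθ.le]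
      norm_num
    have h4 : θ ^ ((2:ℝ) + 2 * b) = θ ^ (2:ℕ) * θ ^ (2 * b) := by
      rw [Real.rpow_add hθ, h5]
    rw [h1, h2, h3, h4]
    ring
  rw [intervalIntegral.integral_congr hcong, intervalIntegral.integral_const_mul,
    ← mul_assoc]
  congr 1
  have h6 : θ ^ ((3:ℝ) + 2 * b) = θ ^ (1:ℝ) * θ ^ ((2:ℝ) + 2 * b) := by
    rw [← Real.rpow_add hθ]; ring_nf
  rw [h6, Real.rpow_one]

set_option maxHeartbeats 1000000 in
/-- On `[0,1]`, `Φ_{a,b}(θ) ∼ θ^{3+2b}`. -/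
theorem stmt_5 (a b : ℝ) (ha : 0 ≤ a) (hb : -1 < b) :
    ∃ c₁ c₂ : ℝ, 0 < c₁ ∧ c₁ < c₂ ∧ ∀ θ ∈ Set.Icc (0:ℝ) 1,
      c₁ * θ ^ (3 + 2 * b) ≤ PhiAB a b θ ∧ PhiAB a b θ ≤ c₂ * θ ^ (3 + 2 * b) := by
  set K : ℝ := ∫ t in (0:ℝ)..1, t ^ 2 * (1 - t ^ 2) ^ b with hK
  have hKint : IntervalIntegrable (fun t : ℝ => t ^ 2 * (1 - t ^ 2) ^ b) volume 0 1 := by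
    have := hInt b hb 1 one_pos
    simpa using this
  have hKpos : 0 < K := by
    apply intervalIntegral_pos_of_pos_on hKint _ one_pos
    intro x hx
    have h1 : (0:ℝ) < 1 - x ^ 2 := by nlinarith [hx.1, hx.2]
    exact mul_pos (pow_pos hx.1 2) (Real.rpow_pos_of_pos h1 b)
  set M : ℝ := max ((2:ℝ) ^ b) ((2 * Real.sqrt 2) ^ b) with hM
  set m : ℝ := min ((2:ℝ) ^ b) ((2 * Real.sqrt 2) ^ b) with hm
  have hs2 : (1:ℝ) ≤ Real.sqrt 2 := Real.one_le_sqrt.mpr (by norm_num)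
  have hmpos : 0 < m := by
    apply lt_min (Real.rpow_pos_of_pos two_pos b)
    exact Real.rpow_pos_of_pos (by linarith) b
  have hMpos : 0 < M := lt_of_lt_of_le hmpos (min_le_max)
  have hmM : m ≤ M := min_le_max
  set C₁ : ℝ := M⁻¹ with hC₁
  set C₂ : ℝ := Real.sqrt 2 ^ a * m⁻¹ with hC₂
  have hC₁pos : 0 < C₁ := inv_pos.mpr hMpos
  have hone_le : (1:ℝ) ≤ Real.sqrt 2 ^ a := by
    calc (1:ℝ) = 1 ^ a := (Real.one_rpow a).symm
    _ ≤ Real.sqrt 2 ^ a := Real.rpow_le_rpow zero_le_one hs2 ha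
  have hC₁₂ : C₁ ≤ C₂ := by
    rw [hC₁, hC₂]
    calc M⁻¹ ≤ m⁻¹ := inv_anti₀ hmpos hmM
    _ = 1 * m⁻¹ := (one_mul _).symm
    _ ≤ Real.sqrt 2 ^ a * m⁻¹ :=
        mul_le_mul_of_nonneg_right hone_le (inv_nonneg.mpr hmpos.le)
  refine ⟨C₁ * K, C₂ * K + 1, mul_pos hC₁pos hKpos, ?_, ?_⟩
  · have : C₁ * K ≤ C₂ * K := mul_le_mul_of_nonneg_right hC₁₂ hKpos.le
    linarith
  intro θ hθ
  obtain ⟨hθ0, hθ1⟩ := hθ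
  rcases eq_or_lt_of_le hθ0 with h0 | hθpos
  · rw [← h0]
    have e1 : (0:ℝ) ^ (3 + 2 * b) = 0 := Real.zero_rpow (by linarith)
    have e2 : PhiAB a b 0 = 0 := by
      rw [PhiAB, intervalIntegral.integral_same]
    rw [e1, e2]; norm_num
  have sandwich : ∀ ξ ∈ Set.Icc 0 θ,
      C₁ * (ξ ^ 2 * (θ ^ 2 - ξ ^ 2) ^ b)
        ≤ ξ ^ 2 * Real.sqrt (1 + ξ ^ 2) ^ a * (θ ^ 2 - ξ ^ 2) ^ b
            / (Real.sqrt (1 + θ ^ 2) + Real.sqrt (1 + ξ ^ 2)) ^ b ∧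
      ξ ^ 2 * Real.sqrt (1 + ξ ^ 2) ^ a * (θ ^ 2 - ξ ^ 2) ^ b
            / (Real.sqrt (1 + θ ^ 2) + Real.sqrt (1 + ξ ^ 2)) ^ b
        ≤ C₂ * (ξ ^ 2 * (θ ^ 2 - ξ ^ 2) ^ b) := by
    intro ξ hξ
    obtain ⟨hξ0, hξθ⟩ := hξ
    set A : ℝ := Real.sqrt (1 + ξ ^ 2) with hA
    set T : ℝ := Real.sqrt (1 + θ ^ 2) with hT
    have hA1 : 1 ≤ A := Real.one_le_sqrt.mpr (by nlinarith)
    have hA2 : A ≤ Real.sqrt 2 := Real.sqrt_le_sqrt (by nlinarith)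
    have hT1 : 1 ≤ T := Real.one_le_sqrt.mpr (by nlinarith)
    have hT2 : T ≤ Real.sqrt 2 := Real.sqrt_le_sqrt (by nlinarith)
    have hS1 : (2:ℝ) ≤ T + A := by linarith
    have hS2 : T + A ≤ 2 * Real.sqrt 2 := by linarith
    have hSb_lo : m ≤ (T + A) ^ b := by
      rcases le_or_gt 0 b with hb0 | hb0
      · exact le_trans (min_le_left _ _) (Real.rpow_le_rpow (by norm_num) hS1 hb0)
      · exact le_trans (min_le_right _ _)
          (Real.rpow_le_rpow_of_nonpos (by linarith) hS2 hb0.le)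
    have hSb_hi : (T + A) ^ b ≤ M := by
      rcases le_or_gt 0 b with hb0 | hb0
      · exact le_trans (Real.rpow_le_rpow (by linarith) hS2 hb0) (le_max_right _ _)
      · exact le_trans (Real.rpow_le_rpow_of_nonpos two_pos hS1 hb0.le) (le_max_left _ _)
    have hSbpos : 0 < (T + A) ^ b := lt_of_lt_of_le hmpos hSb_lo
    have hAa1 : 1 ≤ A ^ a := by
      calc (1:ℝ) = 1 ^ a := (Real.one_rpow a).symm
      _ ≤ A ^ a := Real.rpow_le_rpow zero_le_one hA1 ha
    have hAa2 : A ^ a ≤ Real.sqrt 2 ^ a :=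
      Real.rpow_le_rpow (by linarith) hA2 ha
    have hP : 0 ≤ ξ ^ 2 * (θ ^ 2 - ξ ^ 2) ^ b :=
      mul_nonneg (by positivity) (Real.rpow_nonneg (by nlinarith) b)
    have hratio_lo : C₁ ≤ A ^ a / (T + A) ^ b := by
      rw [hC₁, inv_eq_one_div]
      exact div_le_div₀ (by linarith) hAa1 hSbpos hSb_hi
    have hratio_hi : A ^ a / (T + A) ^ b ≤ C₂ := by
      rw [hC₂, inv_eq_one_div, ← mul_div_assoc, mul_one]
      exact div_le_div₀ (by positivity) hAa2 hmpos hSb_lo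
    have hre : ξ ^ 2 * A ^ a * (θ ^ 2 - ξ ^ 2) ^ b / (T + A) ^ b
        = (ξ ^ 2 * (θ ^ 2 - ξ ^ 2) ^ b) * (A ^ a / (T + A) ^ b) := by
      field_simp
    constructor
    · rw [hre]
      calc C₁ * (ξ ^ 2 * (θ ^ 2 - ξ ^ 2) ^ b)
          = (ξ ^ 2 * (θ ^ 2 - ξ ^ 2) ^ b) * C₁ := by ring
        _ ≤ (ξ ^ 2 * (θ ^ 2 - ξ ^ 2) ^ b) * (A ^ a / (T + A) ^ b) :=
            mul_le_mul_of_nonneg_left hratio_lo hP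
    · rw [hre]
      calc (ξ ^ 2 * (θ ^ 2 - ξ ^ 2) ^ b) * (A ^ a / (T + A) ^ b)
          ≤ (ξ ^ 2 * (θ ^ 2 - ξ ^ 2) ^ b) * C₂ :=
            mul_le_mul_of_nonneg_left hratio_hi hP
        _ = C₂ * (ξ ^ 2 * (θ ^ 2 - ξ ^ 2) ^ b) := by ring
  have hIh := hInt b hb θ hθpos
  have hIg : IntervalIntegrable (fun ξ =>
      ξ ^ 2 * Real.sqrt (1 + ξ ^ 2) ^ a * (θ ^ 2 - ξ ^ 2) ^ b
        / (Real.sqrt (1 + θ ^ 2) + Real.sqrt (1 + ξ ^ 2)) ^ b) volume 0 θ := by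
    refine (hIh.const_mul C₂).mono_fun ?_ ?_
    · apply Measurable.aestronglyMeasurable; fun_prop
    · filter_upwards [ae_restrict_mem measurableSet_uIoc] with x hx
      rw [Set.uIoc_of_le hθpos.le] at hx
      have hx' : x ∈ Set.Icc 0 θ := ⟨hx.1.le, hx.2⟩
      obtain ⟨hlo, hhi⟩ := sandwich x hx'
      have hC₁P : 0 ≤ C₁ * (x ^ 2 * (θ ^ 2 - x ^ 2) ^ b) := by
        apply mul_nonneg hC₁pos.le
        exact mul_nonneg (by positivity) (Real.rpow_nonneg (by nlinarith [hx'.1, hx'.2]) b)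
      have hgnn : 0 ≤ x ^ 2 * Real.sqrt (1 + x ^ 2) ^ a * (θ ^ 2 - x ^ 2) ^ b
          / (Real.sqrt (1 + θ ^ 2) + Real.sqrt (1 + x ^ 2)) ^ b :=
        le_trans hC₁P hlo
      have hC₂P : 0 ≤ C₂ * (x ^ 2 * (θ ^ 2 - x ^ 2) ^ b) := le_trans hgnn hhi
      rw [Real.norm_eq_abs, Real.norm_eq_abs, abs_of_nonneg hgnn, abs_of_nonneg hC₂P]
      exact hhi
  have hval := hVal b θ hθpos
  constructor
  · calc (C₁ * K) * θ ^ (3 + 2 * b)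
        = C₁ * (θ ^ (3 + 2 * b) * K) := by ring
      _ = C₁ * ∫ ξ in (0:ℝ)..θ, ξ ^ 2 * (θ ^ 2 - ξ ^ 2) ^ b := by rw [hval]
      _ = ∫ ξ in (0:ℝ)..θ, C₁ * (ξ ^ 2 * (θ ^ 2 - ξ ^ 2) ^ b) :=
          (intervalIntegral.integral_const_mul C₁ _).symm
      _ ≤ PhiAB a b θ := by
          rw [PhiAB]
          exact integral_mono_on hθpos.le (hIh.const_mul C₁) hIg
            (fun x hx => (sandwich x hx).1)
  · have step : PhiAB a b θ ≤ (C₂ * K) * θ ^ (3 + 2 * b) := by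
      calc PhiAB a b θ
          ≤ ∫ ξ in (0:ℝ)..θ, C₂ * (ξ ^ 2 * (θ ^ 2 - ξ ^ 2) ^ b) := by
            rw [PhiAB]
            exact integral_mono_on hθpos.le hIg (hIh.const_mul C₂)
              (fun x hx => (sandwich x hx).2)
        _ = C₂ * ∫ ξ in (0:ℝ)..θ, ξ ^ 2 * (θ ^ 2 - ξ ^ 2) ^ b :=
            intervalIntegral.integral_const_mul C₂ _
        _ = (C₂ * K) * θ ^ (3 + 2 * b) := by rw [hval]; ring
    have hθe : 0 ≤ θ ^ (3 + 2 * b) := Real.rpow_nonneg hθ0 _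
    nlinarith [step]
end

section
/- For a ≥ 0, b > −1 and θ ∈ [1,∞), there exist constants c₂ > c₁ > 0 (depending only on a, b) such that c₁·θ^{3+b+a} ≤ Φ_{a,b}(θ) ≤ c₂·θ^{3+b+a}. -/
open Real MeasureTheory intervalIntegral Set

lemma rpow_le_rpow_abs_of_mem_Icc_inv {c r : ℝ} (b : ℝ) (hc : 0 < c) (hr : r ∈ Icc c⁻¹ c) :
    r ^ b ≤ c ^ |b| := by
  have hr₀ : 0 < r := (inv_pos.2 hc).trans_le hr.1
  rcases le_total 0 b with hb | hb
  · rw [abs_of_nonneg hb]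
    exact rpow_le_rpow hr₀.le hr.2 hb
  · calc r ^ b ≤ c⁻¹ ^ b := rpow_le_rpow_of_nonpos (inv_pos.2 hc) hr.1 hb
      _ = c ^ |b| := by rw [abs_of_nonpos hb, inv_rpow hc.le, rpow_neg hc.le]

lemma rpow_neg_abs_le_rpow_of_mem_Icc_inv {c r : ℝ} (b : ℝ) (hc : 0 < c) (hr : r ∈ Icc c⁻¹ c) :
    c ^ (-|b|) ≤ r ^ b := by
  have hr₀ : 0 < r := (inv_pos.2 hc).trans_le hr.1
  have hr' : r⁻¹ ∈ Icc c⁻¹ c := ⟨inv_anti₀ hr₀ hr.2, inv_le_of_inv_le₀ hc hr.1⟩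
  have := rpow_le_rpow_abs_of_mem_Icc_inv b hc hr'
  rw [inv_rpow hr₀.le] at this
  rw [rpow_neg hc.le]
  exact inv_le_of_inv_le₀ (by positivity) this

lemma sq_mul_rpow_mul_rpow_add_one {x : ℝ} (hx : 0 < x) (a b : ℝ) :
    x ^ 2 * x ^ a * x ^ (b + 1) = x ^ (3 + b + a) := by
  rw [← rpow_natCast, ← rpow_add hx, ← rpow_add hx]
  ring_nf

lemma intervalIntegrable_sub_rpow {b : ℝ} (hb : -1 < b) (c θ : ℝ) :
    IntervalIntegrable (fun ξ => (θ - ξ) ^ b) volume c θ := by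
  simpa using (intervalIntegrable_rpow' (a := θ - c) (b := 0) hb).comp_sub_left θ

lemma integral_sub_rpow {b : ℝ} (hb : -1 < b) (c θ : ℝ) :
    ∫ ξ in c..θ, (θ - ξ) ^ b = (θ - c) ^ (b + 1) / (b + 1) := by
  rw [integral_comp_sub_left (fun x => x ^ b) θ, sub_self, integral_rpow (Or.inl hb),
    zero_rpow (by linarith), sub_zero]

lemma le_sqrt_one_add_sq (x : ℝ) : x ≤ √(1 + x ^ 2) :=
  le_sqrt_of_sq_le (by linarith)

lemma sqrt_one_add_sq_le {x : ℝ} (hx : 0 ≤ x) : √(1 + x ^ 2) ≤ 1 + x :=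
  (sqrt_le_left (by linarith)).2 (by nlinarith)

noncomputable def phiIntegrand (a b θ ξ : ℝ) : ℝ :=
  ξ ^ 2 * √(1 + ξ ^ 2) ^ a * (θ ^ 2 - ξ ^ 2) ^ b / (√(1 + θ ^ 2) + √(1 + ξ ^ 2)) ^ b

noncomputable def phiRatio (θ ξ : ℝ) : ℝ := (θ + ξ) / (√(1 + θ ^ 2) + √(1 + ξ ^ 2))

lemma phiIntegrand_eq {a b θ ξ : ℝ} (hξ : 0 ≤ ξ) (hξθ : ξ ≤ θ) :
    phiIntegrand a b θ ξ = ξ ^ 2 * √(1 + ξ ^ 2) ^ a * (θ - ξ) ^ b * phiRatio θ ξ ^ b := by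
  rw [phiIntegrand, phiRatio, div_rpow (by linarith) (by positivity),
    show θ ^ 2 - ξ ^ 2 = (θ - ξ) * (θ + ξ) by ring, mul_rpow (by linarith) (by linarith)]
  ring

lemma phiRatio_mem_Icc {θ ξ : ℝ} (hθ : 1 ≤ θ) (hξ : 0 ≤ ξ) : phiRatio θ ξ ∈ Icc 3⁻¹ 3 := by
  have hθ' := le_sqrt_one_add_sq θ
  have hξ' := le_sqrt_one_add_sq ξ
  have hθ'' := sqrt_one_add_sq_le (x := θ) (by linarith)
  have hξ'' := sqrt_one_add_sq_le hξ
  rw [phiRatio, mem_Icc, le_div_iff₀ (by positivity), div_le_iff₀ (by positivity)]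
  constructor <;> linarith

lemma phiIntegrand_nonneg {a b θ ξ : ℝ} (hξ : 0 ≤ ξ) (hξθ : ξ ≤ θ) : 0 ≤ phiIntegrand a b θ ξ := by
  have : 0 ≤ θ ^ 2 - ξ ^ 2 := by nlinarith
  unfold phiIntegrand
  positivity

lemma phiIntegrand_le {a b θ ξ : ℝ} (ha : 0 ≤ a) (hθ : 1 ≤ θ) (hξ : 0 ≤ ξ) (hξθ : ξ ≤ θ) :
    phiIntegrand a b θ ξ ≤ 3 ^ |b| * θ ^ 2 * (√2 * θ) ^ a * (θ - ξ) ^ b := by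
  have hsqrt : √(1 + ξ ^ 2) ≤ √2 * θ := by
    rw [← sqrt_sq (by linarith : 0 ≤ θ), ← sqrt_mul zero_le_two]
    exact sqrt_le_sqrt (by nlinarith)
  have hratio := phiRatio_mem_Icc hθ hξ
  have : 0 ≤ phiRatio θ ξ := by linarith [hratio.1]
  have := rpow_le_rpow_abs_of_mem_Icc_inv b (by norm_num) hratio
  have : 0 ≤ θ - ξ := by linarith
  rw [phiIntegrand_eq hξ hξθ]
  calc _ ≤ θ ^ 2 * (√2 * θ) ^ a * (θ - ξ) ^ b * 3 ^ |b| := by gcongr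
    _ = _ := by ring

lemma le_phiIntegrand {a b θ ξ : ℝ} (ha : 0 ≤ a) (hθ : 1 ≤ θ) (hξ : θ / 2 ≤ ξ) (hξθ : ξ ≤ θ) :
    3 ^ (-|b|) * (θ / 2) ^ 2 * (θ / 2) ^ a * (θ - ξ) ^ b ≤ phiIntegrand a b θ ξ := by
  have hξ₀ : 0 ≤ ξ := by linarith
  have hsqrt : θ / 2 ≤ √(1 + ξ ^ 2) := hξ.trans (le_sqrt_one_add_sq ξ)
  have hratio := rpow_neg_abs_le_rpow_of_mem_Icc_inv b (by norm_num) (phiRatio_mem_Icc hθ hξ₀)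
  have : 0 ≤ θ - ξ := by linarith
  rw [phiIntegrand_eq hξ₀ hξθ]
  calc _ = (θ / 2) ^ 2 * (θ / 2) ^ a * (θ - ξ) ^ b * 3 ^ (-|b|) := by ring
    _ ≤ _ := by gcongr

lemma intervalIntegrable_phiIntegrand {a b θ : ℝ} (ha : 0 ≤ a) (hb : -1 < b) (hθ : 1 ≤ θ) :
    IntervalIntegrable (phiIntegrand a b θ) volume 0 θ := by
  refine ((intervalIntegrable_sub_rpow hb 0 θ).const_mul
    (3 ^ |b| * θ ^ 2 * (√2 * θ) ^ a)).mono_fun' ?_ ?_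
  · exact (by unfold phiIntegrand; fun_prop : Measurable (phiIntegrand a b θ)).aestronglyMeasurable
  · rw [uIoc_of_le (by linarith)]
    filter_upwards [ae_restrict_mem measurableSet_Ioc] with ξ hξ
    rw [norm_of_nonneg (phiIntegrand_nonneg hξ.1.le hξ.2)]
    exact phiIntegrand_le ha hθ hξ.1.le hξ.2

lemma PhiAB_le {a b θ : ℝ} (ha : 0 ≤ a) (hb : -1 < b) (hθ : 1 ≤ θ) :
    PhiAB a b θ ≤ √2 ^ a * 3 ^ |b| / (b + 1) * θ ^ (3 + b + a) := by
  have hθ₀ : 0 < θ := by linarith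
  calc PhiAB a b θ ≤ ∫ ξ in (0:ℝ)..θ, 3 ^ |b| * θ ^ 2 * (√2 * θ) ^ a * (θ - ξ) ^ b :=
        integral_mono_on hθ₀.le (intervalIntegrable_phiIntegrand ha hb hθ)
          ((intervalIntegrable_sub_rpow hb 0 θ).const_mul _)
          fun ξ hξ => phiIntegrand_le ha hθ hξ.1 hξ.2
    _ = √2 ^ a * 3 ^ |b| / (b + 1) * (θ ^ 2 * θ ^ a * θ ^ (b + 1)) := by
        rw [intervalIntegral.integral_const_mul, integral_sub_rpow hb, sub_zero, mul_rpow (by positivity) hθ₀.le]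
        ring
    _ = _ := by rw [sq_mul_rpow_mul_rpow_add_one hθ₀]

lemma le_PhiAB {a b θ : ℝ} (ha : 0 ≤ a) (hb : -1 < b) (hθ : 1 ≤ θ) :
    3 ^ (-|b|) / (b + 1) * (θ / 2) ^ (3 + b + a) ≤ PhiAB a b θ := by
  have hθ₀ : 0 < θ := by linarith
  calc 3 ^ (-|b|) / (b + 1) * (θ / 2) ^ (3 + b + a)
      = 3 ^ (-|b|) / (b + 1) * ((θ / 2) ^ 2 * (θ / 2) ^ a * (θ / 2) ^ (b + 1)) := by
        rw [sq_mul_rpow_mul_rpow_add_one (by positivity)]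
    _ = ∫ ξ in θ / 2..θ, 3 ^ (-|b|) * (θ / 2) ^ 2 * (θ / 2) ^ a * (θ - ξ) ^ b := by
        rw [intervalIntegral.integral_const_mul, integral_sub_rpow hb]
        ring_nf
    _ ≤ ∫ ξ in θ / 2..θ, phiIntegrand a b θ ξ :=
        integral_mono_on (by linarith) ((intervalIntegrable_sub_rpow hb _ θ).const_mul _)
          ((intervalIntegrable_phiIntegrand ha hb hθ).mono_set (by
            rw [uIcc_of_le (by linarith), uIcc_of_le (by linarith)]
            exact Icc_subset_Icc (by linarith) le_rfl))
          fun ξ hξ => le_phiIntegrand ha hθ hξ.1 hξ.2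
    _ ≤ PhiAB a b θ :=
        integral_mono_interval (by linarith) (by linarith) le_rfl
          ((ae_restrict_mem measurableSet_Ioc).mono fun ξ hξ =>
            phiIntegrand_nonneg hξ.1.le hξ.2)
          (intervalIntegrable_phiIntegrand ha hb hθ)

/-- On `[1,∞)`, `Φ_{a,b}(θ) ∼ θ^{3+b+a}`. -/
theorem stmt_6 (a b : ℝ) (ha : 0 ≤ a) (hb : -1 < b) :
    ∃ c₁ c₂ : ℝ, 0 < c₁ ∧ c₁ < c₂ ∧ ∀ θ ∈ Set.Ici (1:ℝ),
      c₁ * θ ^ (3 + b + a) ≤ PhiAB a b θ ∧ PhiAB a b θ ≤ c₂ * θ ^ (3 + b + a) := by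
  have hb₁ : 0 < b + 1 := by linarith
  set c₁ : ℝ := 3 ^ (-|b|) / (b + 1) / 2 ^ (3 + b + a)
  set c₂ : ℝ := √2 ^ a * 3 ^ |b| / (b + 1)
  have hc₁ : 0 < c₁ := by positivity
  have hc₂ : 0 < c₂ := by positivity
  refine ⟨c₁, c₁ + c₂, hc₁, by linarith, fun θ (hθ : 1 ≤ θ) => ⟨?_, ?_⟩⟩
  · calc c₁ * θ ^ (3 + b + a) = 3 ^ (-|b|) / (b + 1) * (θ / 2) ^ (3 + b + a) := by
          rw [div_rpow (by linarith) zero_le_two]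
          ring
      _ ≤ PhiAB a b θ := le_PhiAB ha hb hθ
  · have : 0 ≤ c₁ * θ ^ (3 + b + a) := by positivity
    linarith [PhiAB_le ha hb hθ]
end

section
/- For a ≥ 0 and b > −1, the function Φ_{a,b} is Lipschitz on [0,1]: there exists C* > 0 such that |Φ_{a,b}(θ) − Φ_{a,b}(θ̃)| ≤ C*·|θ − θ̃| for all θ, θ̃ ∈ [0,1]. -/
/-!
The substitution `ξ = θ t` gives `Φ_{a,b}(θ) = θ^{3+2b} ∫₀¹ t² (1-t²)^b k(θ,t) dt`, where the kernel
`k(θ,t) = √(1+θ²t²)^a (√(1+θ²) + √(1+θ²t²))^{-b}` is smooth on all of `ℝ²`, the bases of its powers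
being at least `1`. So `k(·,t)` is Lipschitz on `[0,1]` uniformly in `t ∈ [0,1]`, and the integral
inherits this because the weight `t² (1-t²)^b` is integrable for `b > -1`. Finally `θ ↦ θ^{3+2b}` is
`C¹` as `3 + 2b ≥ 1`, and a product of Lipschitz functions on a compact set is Lipschitz.
-/

open Set MeasureTheory NNReal

lemma exists_lipschitzOnWith_mul_of_isCompact {α R : Type*} [PseudoMetricSpace α]
    [SeminormedRing R] {f g : α → R} {s : Set α} {Kf Kg : ℝ≥0} (hs : IsCompact s)
    (hf : LipschitzOnWith Kf f s) (hg : LipschitzOnWith Kg g s) :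
    ∃ K, LipschitzOnWith K (fun x => f x * g x) s := by
  obtain ⟨Mf, hMf⟩ := hs.exists_bound_of_continuousOn hf.continuousOn
  obtain ⟨Mg, hMg⟩ := hs.exists_bound_of_continuousOn hg.continuousOn
  refine ⟨_, LipschitzOnWith.of_dist_le' (K := Mf * Kg + Kf * Mg) fun x hx y hy => ?_⟩
  calc dist (f x * g x) (f y * g y) = ‖f x * (g x - g y) + (f x - f y) * g y‖ := by
        rw [dist_eq_norm]; noncomm_ring
    _ ≤ ‖f x‖ * ‖g x - g y‖ + ‖f x - f y‖ * ‖g y‖ :=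
        (norm_add_le _ _).trans (add_le_add (norm_mul_le _ _) (norm_mul_le _ _))
    _ ≤ Mf * (Kg * dist x y) + Kf * dist x y * Mg := by
        rw [← dist_eq_norm, ← dist_eq_norm]
        gcongr
        · exact (norm_nonneg _).trans (hMf x hx)
        · exact hMf x hx
        · exact hg.dist_le_mul x hx y hy
        · exact hf.dist_le_mul x hx y hy
        · exact hMg y hy
    _ = (Mf * Kg + Kf * Mg) * dist x y := by ring

lemma lipschitzOnWith_integral_of_dist_le {X α E : Type*} [PseudoMetricSpace X]
    [MeasurableSpace α] [NormedAddCommGroup E] [NormedSpace ℝ E] {μ : Measure α}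
    {f : X → α → E} {L : α → ℝ} {s : Set X} (hf : ∀ θ ∈ s, Integrable (f θ) μ)
    (hL : Integrable L μ)
    (h : ∀ᵐ t ∂μ, ∀ θ ∈ s, ∀ θ' ∈ s, dist (f θ t) (f θ' t) ≤ L t * dist θ θ') :
    LipschitzOnWith (∫ t, L t ∂μ).toNNReal (fun θ => ∫ t, f θ t ∂μ) s := by
  refine LipschitzOnWith.of_dist_le' fun θ hθ θ' hθ' => ?_
  rw [dist_eq_norm, ← integral_sub (hf θ hθ) (hf θ' hθ'), ← integral_mul_const]
  refine norm_integral_le_of_norm_le (hL.mul_const _) ?_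
  filter_upwards [h] with t ht
  simpa only [dist_eq_norm] using ht θ hθ θ' hθ'

noncomputable def phiKernel (a b θ t : ℝ) : ℝ :=
  √(1 + (θ * t) ^ 2) ^ a * (√(1 + θ ^ 2) + √(1 + (θ * t) ^ 2)) ^ (-b)

lemma contDiff_phiKernel (a b : ℝ) :
    ContDiff ℝ 1 fun p : ℝ × ℝ => phiKernel a b p.1 p.2 := by
  have hsqrt : ∀ x : ℝ, 0 < √(1 + x ^ 2) := fun x => Real.sqrt_pos.2 (by positivity)
  have hs : ∀ f : ℝ × ℝ → ℝ, ContDiff ℝ 1 f → ContDiff ℝ 1 fun p => √(1 + f p ^ 2) :=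
    fun f hf => (contDiff_const.add (hf.pow 2)).sqrt fun p => by positivity
  unfold phiKernel
  refine ((hs _ (contDiff_fst.mul contDiff_snd)).rpow_const_of_ne fun p => (hsqrt _).ne').mul
    (((hs _ contDiff_fst).add (hs _ (contDiff_fst.mul contDiff_snd))).rpow_const_of_ne
      fun p => (add_pos (hsqrt _) (hsqrt _)).ne')

lemma exists_lipschitzOnWith_phiKernel (a b : ℝ) :
    ∃ K, ∀ t ∈ Icc (0:ℝ) 1, LipschitzOnWith K (phiKernel a b · t) (Icc 0 1) := by
  obtain ⟨K, hK⟩ := (contDiff_phiKernel a b).contDiffOn.exists_lipschitzOnWith one_ne_zero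
    ((convex_Icc 0 1).prod (convex_Icc 0 1)) (isCompact_Icc.prod isCompact_Icc)
  refine ⟨K, fun t ht => ?_⟩
  simpa only [mul_one, Function.comp_def] using
    hK.comp (LipschitzWith.prodMk_right t).lipschitzOnWith fun θ hθ => mk_mem_prod hθ ht

lemma intervalIntegrable_sq_mul_one_sub_sq_rpow {b : ℝ} (hb : -1 < b) :
    IntervalIntegrable (fun t : ℝ => t ^ 2 * (1 - t ^ 2) ^ b) volume 0 1 := by
  have hsing : IntervalIntegrable (fun t : ℝ => (1 - t) ^ b) volume 0 1 := by
    simpa using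
      ((intervalIntegral.intervalIntegrable_rpow' (a := 0) (b := 1) hb).comp_sub_left 1).symm
  have hcont : ContinuousOn (fun t : ℝ => t ^ 2 * (1 + t) ^ b) (uIcc 0 1) := by
    rw [uIcc_of_le zero_le_one]
    exact (continuousOn_pow 2).mul <| ContinuousOn.rpow_const (f := fun t : ℝ => 1 + t)
      (by fun_prop) fun t ht => Or.inl (by linarith [ht.1])
  refine (hsing.mul_continuousOn hcont).congr fun t ht => ?_
  rw [uIoc_of_le zero_le_one] at ht
  rw [show 1 - t ^ 2 = (1 - t) * (1 + t) by ring,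
    Real.mul_rpow (by linarith [ht.2]) (by linarith [ht.1])]
  ring

lemma PhiAB_eq_rpow_mul_integral {a b θ : ℝ} (hb : -1 < b) (hθ : 0 ≤ θ) :
    PhiAB a b θ =
      θ ^ (3 + 2 * b) * ∫ t in (0:ℝ)..1, t ^ 2 * (1 - t ^ 2) ^ b * phiKernel a b θ t := by
  rcases hθ.eq_or_lt with rfl | hθ
  · simp [PhiAB, Real.zero_rpow (by linarith : (3:ℝ) + 2 * b ≠ 0)]
  have hpt : ∀ t ∈ uIcc (0:ℝ) 1,
      (θ * t) ^ 2 * √(1 + (θ * t) ^ 2) ^ a * (θ ^ 2 - (θ * t) ^ 2) ^ b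
          / (√(1 + θ ^ 2) + √(1 + (θ * t) ^ 2)) ^ b
        = θ ^ (2 + 2 * b) * (t ^ 2 * (1 - t ^ 2) ^ b * phiKernel a b θ t) := by
    intro t ht
    rw [uIcc_of_le zero_le_one] at ht
    have h1t : 0 ≤ 1 - t ^ 2 := by nlinarith [ht.1, ht.2]
    rw [show θ ^ 2 - (θ * t) ^ 2 = θ ^ 2 * (1 - t ^ 2) by ring, Real.mul_rpow (by positivity) h1t,
      ← Real.rpow_natCast_mul hθ.le, Real.rpow_add hθ, phiKernel, Real.rpow_neg (by positivity)]
    push_cast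
    rw [Real.rpow_two]
    ring
  have hsub := intervalIntegral.smul_integral_comp_mul_left (a := 0) (b := 1) (fun ξ =>
    ξ ^ 2 * √(1 + ξ ^ 2) ^ a * (θ ^ 2 - ξ ^ 2) ^ b / (√(1 + θ ^ 2) + √(1 + ξ ^ 2)) ^ b) θ
  rw [mul_zero, mul_one, intervalIntegral.integral_congr hpt, smul_eq_mul] at hsub
  calc PhiAB a b θ = θ * ∫ t in (0:ℝ)..1, θ ^ (2 + 2 * b) *
        (t ^ 2 * (1 - t ^ 2) ^ b * phiKernel a b θ t) := hsub.symm
    _ = _ := by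
        rw [intervalIntegral.integral_const_mul, ← mul_assoc,
          ← Real.rpow_one_add' hθ.le (by linarith), show (1:ℝ) + (2 + 2 * b) = 3 + 2 * b by ring]

lemma exists_lipschitzOnWith_integral_phiKernel (a : ℝ) {b : ℝ} (hb : -1 < b) :
    ∃ K, LipschitzOnWith K
      (fun θ => ∫ t in (0:ℝ)..1, t ^ 2 * (1 - t ^ 2) ^ b * phiKernel a b θ t) (Icc 0 1) := by
  obtain ⟨K, hK⟩ := exists_lipschitzOnWith_phiKernel a b
  have hw := intervalIntegrable_sq_mul_one_sub_sq_rpow hb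
  simp_rw [intervalIntegral.integral_of_le zero_le_one]
  refine ⟨_, lipschitzOnWith_integral_of_dist_le (fun θ _ => ?_) (hw.1.norm.mul_const K) ?_⟩
  · exact (hw.mul_continuousOn ((contDiff_phiKernel a b).continuous.comp
      (continuous_const.prodMk continuous_id)).continuousOn).1
  · filter_upwards [ae_restrict_mem measurableSet_Ioc] with t ht θ hθ θ' hθ'
    rw [← smul_eq_mul, ← smul_eq_mul (a := t ^ 2 * _), dist_smul₀, mul_assoc]
    exact mul_le_mul_of_nonneg_left (hK t (Ioc_subset_Icc_self ht) |>.dist_le_mul θ hθ θ' hθ')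
      (norm_nonneg _)

theorem stmt_7_general (a b : ℝ) (hb : -1 < b) :
    ∃ C : ℝ, 0 < C ∧ ∀ θ ∈ Set.Icc (0:ℝ) 1, ∀ θ' ∈ Set.Icc (0:ℝ) 1,
      |PhiAB a b θ - PhiAB a b θ'| ≤ C * |θ - θ'| := by
  obtain ⟨K₁, hpow⟩ := (Real.contDiff_rpow_const_of_le (n := 1) (p := 3 + 2 * b)
    (by push_cast; linarith)).contDiffOn.exists_lipschitzOnWith one_ne_zero (convex_Icc 0 1)
    isCompact_Icc
  obtain ⟨K₂, hH⟩ := exists_lipschitzOnWith_integral_phiKernel a hb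
  obtain ⟨K, hK⟩ := exists_lipschitzOnWith_mul_of_isCompact isCompact_Icc hpow hH
  refine ⟨K + 1, by positivity, fun θ hθ θ' hθ' => ?_⟩
  calc |PhiAB a b θ - PhiAB a b θ'| ≤ K * |θ - θ'| := by
        rw [PhiAB_eq_rpow_mul_integral hb hθ.1, PhiAB_eq_rpow_mul_integral hb hθ'.1]
        exact hK.dist_le_mul θ hθ θ' hθ'
    _ ≤ (K + 1) * |θ - θ'| := by gcongr; linarith

/-- `Φ_{a,b}` is Lipschitz on `[0,1]`. -/
theorem stmt_7 (a b : ℝ) (ha : 0 ≤ a) (hb : -1 < b) :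
    ∃ C : ℝ, 0 < C ∧ ∀ θ ∈ Set.Icc (0:ℝ) 1, ∀ θ' ∈ Set.Icc (0:ℝ) 1,
      |PhiAB a b θ - PhiAB a b θ'| ≤ C * |θ - θ'| :=
  stmt_7_general a b hb
end

section
/- Let σ ∈ (0, 3/2), α > 0 and G(ε) = ∫₀^∞ ξ² (max(α − ε√(1+ξ²), 0))^{σ+1} dξ. There exist constants c₂ > c₁ > 0, independent of α, such that c₁ α^{−3/2} (α−ε)^{5/2+σ} ≤ G(ε) ≤ c₂ α^{−3/2} (α−ε)^{5/2+σ} for all ε ∈ [α/√2, α]. -/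
open MeasureTheory Set

/-- `G(ε) = ∫₀^∞ ξ² (max(α − ε√(1+ξ²), 0))^{σ+1} dξ`. -/
noncomputable def Gfun (σ α ε : ℝ) : ℝ :=
  ∫ ξ in Set.Ioi (0:ℝ), ξ ^ 2 * (max (α - ε * Real.sqrt (1 + ξ ^ 2)) 0) ^ (σ + 1)

private lemma cont_f (σ α ε : ℝ) (hσ : 0 ≤ σ) :
    Continuous fun ξ : ℝ => ξ ^ 2 * (max (α - ε * Real.sqrt (1 + ξ ^ 2)) 0) ^ (σ + 1) := by
  have h1 : Continuous fun ξ : ℝ => max (α - ε * Real.sqrt (1 + ξ ^ 2)) 0 := by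
    apply Continuous.max _ continuous_const
    exact continuous_const.sub (continuous_const.mul (Real.continuous_sqrt.comp (by continuity)))
  exact (continuous_pow 2).mul (h1.rpow_const fun x => Or.inr (by linarith))

set_option maxHeartbeats 1000000 in
/-- On `[α/√2, α]`, `G(ε) ∼ α^{−3/2} (α−ε)^{5/2+σ}` with α-independent constants. -/
theorem stmt_9 (σ : ℝ) (hσ : σ ∈ Set.Ioo (0:ℝ) (3/2)) :
    ∃ c₁ c₂ : ℝ, 0 < c₁ ∧ c₁ < c₂ ∧ ∀ α : ℝ, 0 < α →
      ∀ ε ∈ Set.Icc (α / Real.sqrt 2) α,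
        c₁ * α ^ (-(3/2) : ℝ) * (α - ε) ^ (5/2 + σ) ≤ Gfun σ α ε ∧
        Gfun σ α ε ≤ c₂ * α ^ (-(3/2) : ℝ) * (α - ε) ^ (5/2 + σ) := by
  obtain ⟨hσ0, hσ32⟩ := hσ
  refine ⟨(1/2 : ℝ) ^ (σ + 1) / 3, 8/3, by positivity, ?_, ?_⟩
  · have h1 : ((1:ℝ)/2) ^ (σ + 1) ≤ 1 :=
      Real.rpow_le_one (by norm_num) (by norm_num) (by linarith)
    linarith
  intro α hα ε hε
  obtain ⟨hε1, hε2⟩ := hε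
  have hs2 : (0:ℝ) < Real.sqrt 2 := by positivity
  have hε0 : 0 < ε := lt_of_lt_of_le (by positivity) hε1
  have hαε : α ≤ Real.sqrt 2 * ε := by
    rw [div_le_iff₀ hs2] at hε1; linarith
  have hsq2 : Real.sqrt 2 ^ 2 = 2 := Real.sq_sqrt (by norm_num)
  have hα2ε : α ^ 2 ≤ 2 * ε ^ 2 := by nlinarith
  set δ := α - ε with hδdef
  have hδ0 : 0 ≤ δ := by simp only [hδdef]; linarith
  set f := fun ξ : ℝ => ξ ^ 2 * (max (α - ε * Real.sqrt (1 + ξ ^ 2)) 0) ^ (σ + 1) with hfdef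
  have hGf : Gfun σ α ε = ∫ ξ in Ioi (0:ℝ), f ξ := rfl
  have hfc : Continuous f := cont_f σ α ε hσ0.le
  have hfnn : ∀ ξ, 0 ≤ f ξ := fun ξ =>
    mul_nonneg (sq_nonneg ξ) (Real.rpow_nonneg (le_max_right _ _) _)
  rcases eq_or_lt_of_le hδ0 with hδz | hδpos
  · -- δ = 0, i.e. ε = α : both sides are 0
    have hG : Gfun σ α ε = 0 := by
      rw [hGf, MeasureTheory.setIntegral_congr_fun (g := fun _ => (0:ℝ)) measurableSet_Ioi ?_]
      · simp
      · intro ξ hξ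
        have hξ0 : (0:ℝ) < ξ := hξ
        have h1 : (1:ℝ) ≤ Real.sqrt (1 + ξ ^ 2) := by
          have h := Real.sqrt_le_sqrt (show (1:ℝ) ≤ 1 + ξ ^ 2 by nlinarith)
          rwa [Real.sqrt_one] at h
        have h2 : α - ε * Real.sqrt (1 + ξ ^ 2) ≤ 0 := by nlinarith
        simp only [hfdef]
        rw [max_eq_right h2, Real.zero_rpow (by linarith), mul_zero]
    constructor <;>
      rw [hG, ← hδz, Real.zero_rpow (by linarith : (5/2 + σ : ℝ) ≠ 0), mul_zero]
  · -- main case δ > 0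
    set t := δ / α with htdef
    have ht : 0 < t := div_pos hδpos hα
    have hαt : α * t = δ := by rw [htdef]; field_simp
    set b1 := Real.sqrt t with hb1def
    have hb1 : 0 < b1 := Real.sqrt_pos.mpr ht
    have hb1sq : b1 ^ 2 = t := Real.sq_sqrt ht.le
    set b2 := 2 * b1 with hb2def
    have hb12 : b1 ≤ b2 := by linarith
    have hb2 : 0 < b2 := by linarith
    -- the integrand vanishes beyond b2
    have hvanish : ∀ ξ ∈ Ioi b2, f ξ = 0 := by
      intro ξ hξ
      have hξb : b2 < ξ := hξ
      have hξ0 : 0 < ξ := lt_trans hb2 hξb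
      have hξ2 : 4 * t < ξ ^ 2 := by nlinarith
      have h2 : α ^ 2 ≤ ε ^ 2 * (1 + ξ ^ 2) := by nlinarith
      have h3 : Real.sqrt (α ^ 2) ≤ Real.sqrt (ε ^ 2 * (1 + ξ ^ 2)) := Real.sqrt_le_sqrt h2
      rw [Real.sqrt_sq hα.le, Real.sqrt_mul (sq_nonneg ε), Real.sqrt_sq hε0.le] at h3
      simp only [hfdef]
      rw [max_eq_right (by linarith), Real.zero_rpow (by linarith), mul_zero]
    have hint2 : IntegrableOn f (Ioc 0 b2) :=
      (intervalIntegrable_iff_integrableOn_Ioc_of_le hb2.le).mp (hfc.intervalIntegrable 0 b2)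
    have hintIoi : IntegrableOn f (Ioi b2) := by
      rw [integrableOn_congr_fun hvanish measurableSet_Ioi]
      exact integrableOn_zero
    have hG2 : Gfun σ α ε = ∫ ξ in Ioc 0 b2, f ξ := by
      rw [hGf, ← Ioc_union_Ioi_eq_Ioi hb2.le,
        MeasureTheory.setIntegral_union (Ioc_disjoint_Ioi le_rfl) measurableSet_Ioi hint2 hintIoi,
        MeasureTheory.setIntegral_congr_fun measurableSet_Ioi hvanish]
      simp
    -- upper bound
    have hub : ∫ ξ in Ioc 0 b2, f ξ ≤ ∫ ξ in Ioc 0 b2, ξ ^ 2 * δ ^ (σ + 1) := by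
      apply MeasureTheory.setIntegral_mono_on hint2 ?_ measurableSet_Ioc ?_
      · exact ((continuous_pow 2).mul continuous_const).integrableOn_Ioc
      · intro ξ hξ
        have h1 : (1:ℝ) ≤ Real.sqrt (1 + ξ ^ 2) := by
          have h := Real.sqrt_le_sqrt (show (1:ℝ) ≤ 1 + ξ ^ 2 by nlinarith)
          rwa [Real.sqrt_one] at h
        have hmax : max (α - ε * Real.sqrt (1 + ξ ^ 2)) 0 ≤ δ := by
          apply max_le _ hδ0
          nlinarith
        exact mul_le_mul_of_nonneg_left
          (Real.rpow_le_rpow (le_max_right _ _) hmax (by linarith)) (sq_nonneg ξ)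
    have hcalc2 : ∫ ξ in Ioc 0 b2, ξ ^ 2 * δ ^ (σ + 1) = b2 ^ 3 / 3 * δ ^ (σ + 1) := by
      rw [← intervalIntegral.integral_of_le hb2.le, intervalIntegral.integral_mul_const,
        integral_pow]
      norm_num
    -- lower bound
    have hint1 : IntegrableOn f (Ioc 0 b1) :=
      (intervalIntegrable_iff_integrableOn_Ioc_of_le hb1.le).mp (hfc.intervalIntegrable 0 b1)
    have hlb : ∫ ξ in Ioc 0 b1, ξ ^ 2 * (δ / 2) ^ (σ + 1) ≤ ∫ ξ in Ioc 0 b1, f ξ := by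
      apply MeasureTheory.setIntegral_mono_on ?_ hint1 measurableSet_Ioc ?_
      · exact ((continuous_pow 2).mul continuous_const).integrableOn_Ioc
      · intro ξ hξ
        obtain ⟨hξ0, hξb⟩ := hξ
        have hξ2 : ξ ^ 2 ≤ t := by nlinarith
        have hsq : Real.sqrt (1 + ξ ^ 2) ≤ 1 + ξ ^ 2 / 2 := by
          have h := Real.sqrt_le_sqrt
            (show (1:ℝ) + ξ ^ 2 ≤ (1 + ξ ^ 2 / 2) ^ 2 by nlinarith [sq_nonneg (ξ ^ 2)])
          rwa [Real.sqrt_sq (by positivity)] at h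
        have h6 : ε * Real.sqrt (1 + ξ ^ 2) ≤ ε * (1 + ξ ^ 2 / 2) :=
          mul_le_mul_of_nonneg_left hsq hε0.le
        have h7 : ε * ξ ^ 2 ≤ α * ξ ^ 2 := mul_le_mul_of_nonneg_right hε2 (sq_nonneg ξ)
        have h8 : α * ξ ^ 2 ≤ α * t := mul_le_mul_of_nonneg_left hξ2 hα.le
        have h5 : δ / 2 ≤ α - ε * Real.sqrt (1 + ξ ^ 2) := by nlinarith
        exact mul_le_mul_of_nonneg_left
          (Real.rpow_le_rpow (by positivity) (h5.trans (le_max_left _ _)) (by linarith))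
          (sq_nonneg ξ)
    have hlb2 : ∫ ξ in Ioc 0 b1, f ξ ≤ ∫ ξ in Ioc 0 b2, f ξ :=
      MeasureTheory.setIntegral_mono_set hint2 (Filter.Eventually.of_forall hfnn)
        (HasSubset.Subset.eventuallyLE (Ioc_subset_Ioc_right hb12))
    have hcalc1 : ∫ ξ in Ioc 0 b1, ξ ^ 2 * (δ / 2) ^ (σ + 1) = b1 ^ 3 / 3 * (δ / 2) ^ (σ + 1) := by
      rw [← intervalIntegral.integral_of_le hb1.le, intervalIntegral.integral_mul_const,
        integral_pow]
      norm_num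
    -- the key algebraic identity
    have hb13 : b1 ^ 3 = t ^ ((3:ℝ)/2) := by
      rw [hb1def, ← Real.rpow_natCast (Real.sqrt t) 3, Real.sqrt_eq_rpow,
        ← Real.rpow_mul ht.le]
      norm_num
    have hkey : b1 ^ 3 * δ ^ (σ + 1) = α ^ (-(3/2) : ℝ) * δ ^ (5/2 + σ) := by
      rw [hb13, htdef, Real.div_rpow hδ0 hα.le, Real.rpow_neg hα.le,
        show (5/2 + σ : ℝ) = (3:ℝ)/2 + (σ + 1) by ring,
        Real.rpow_add hδpos ((3:ℝ)/2) (σ + 1), div_eq_mul_inv]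
      ring
    have h12 : (δ / 2) ^ (σ + 1) = (1/2 : ℝ) ^ (σ + 1) * δ ^ (σ + 1) := by
      rw [show δ / 2 = 1/2 * δ by ring, Real.mul_rpow (by norm_num) hδ0]
    constructor
    · calc (1/2 : ℝ) ^ (σ + 1) / 3 * α ^ (-(3/2) : ℝ) * δ ^ (5/2 + σ)
          = b1 ^ 3 / 3 * (δ / 2) ^ (σ + 1) := by
            rw [h12]
            rw [mul_assoc, ← hkey]
            ring
        _ ≤ ∫ ξ in Ioc 0 b1, f ξ := by rw [← hcalc1]; exact hlb
        _ ≤ ∫ ξ in Ioc 0 b2, f ξ := hlb2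
        _ = Gfun σ α ε := hG2.symm
    · calc Gfun σ α ε = ∫ ξ in Ioc 0 b2, f ξ := hG2
        _ ≤ b2 ^ 3 / 3 * δ ^ (σ + 1) := by rw [← hcalc2]; exact hub
        _ = 8/3 * α ^ (-(3/2) : ℝ) * δ ^ (5/2 + σ) := by
            rw [hb2def, show (2 * b1) ^ 3 / 3 * δ ^ (σ + 1) = 8/3 * (b1 ^ 3 * δ ^ (σ + 1)) by ring,
              hkey]
            ring
end

section
/- Let σ ∈ (0, 3/2), α > 0 and G(ε) = ∫₀^∞ ξ² (max(α − ε√(1+ξ²), 0))^{σ+1} dξ. There exist constants c₂ > c₁ > 0, independent of α, such that c₁ ε^{−3} α^{4+σ} ≤ G(ε) ≤ c₂ ε^{−3} α^{4+σ} for all ε ∈ (0, α/√2]. In particular G(ε) > 0 for ε ∈ (0, α), and G(ε) = 0 for ε ≥ α, so G is continuous on (0,∞). -/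
open MeasureTheory Set

noncomputable def gIntegrand (σ α ε ξ : ℝ) : ℝ :=
  ξ ^ 2 * (max (α - ε * √(1 + ξ ^ 2)) 0) ^ (σ + 1)

lemma Gfun_eq_setIntegral_gIntegrand (σ α ε : ℝ) :
    Gfun σ α ε = ∫ ξ in Ioi 0, gIntegrand σ α ε ξ :=
  rfl

lemma integrable_indicator_Ioc_sq_mul (R C : ℝ) :
    Integrable ((Ioc 0 R).indicator fun ξ : ℝ => ξ ^ 2 * C) := by
  rw [integrable_indicator_iff measurableSet_Ioc]
  exact (continuous_pow 2 |>.mul continuous_const).integrableOn_Ioc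

lemma setIntegral_Ioi_indicator_Ioc_sq_mul {R : ℝ} (hR : 0 ≤ R) (C : ℝ) :
    ∫ ξ in Ioi 0, (Ioc 0 R).indicator (fun ξ : ℝ => ξ ^ 2 * C) ξ = C * R ^ 3 / 3 := by
  rw [setIntegral_indicator measurableSet_Ioc, inter_eq_self_of_subset_right Ioc_subset_Ioi_self,
    integral_mul_const, ← intervalIntegral.integral_of_le hR, integral_pow]
  ring

section

variable {σ α ε : ℝ}

lemma gIntegrand_nonneg (σ α ε ξ : ℝ) : 0 ≤ gIntegrand σ α ε ξ :=
  mul_nonneg (sq_nonneg ξ) (Real.rpow_nonneg (le_max_right _ _) _)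

lemma continuous_gIntegrand_uncurry (hσ : -1 < σ) :
    Continuous fun p : ℝ × ℝ => gIntegrand σ α p.1 p.2 := by
  have := Real.continuous_rpow_const (q := σ + 1) (by linarith)
  unfold gIntegrand
  fun_prop

lemma gIntegrand_eq_zero (hσ : -1 < σ) {ξ : ℝ} (h : α ≤ ε * √(1 + ξ ^ 2)) :
    gIntegrand σ α ε ξ = 0 := by
  rw [gIntegrand, max_eq_right (sub_nonpos.2 h), Real.zero_rpow (by linarith), mul_zero]

lemma gIntegrand_le_indicator (hσ : -1 < σ) (hα : 0 ≤ α) {c : ℝ} (hc : 0 < c) (hcε : c ≤ ε)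
    {ξ : ℝ} (hξ : 0 < ξ) :
    gIntegrand σ α ε ξ ≤ (Ioc 0 (α / c)).indicator (fun ξ => ξ ^ 2 * α ^ (σ + 1)) ξ := by
  have hsqrt : ξ < √(1 + ξ ^ 2) := Real.lt_sqrt hξ.le |>.2 (by linarith)
  rcases le_or_gt ξ (α / c) with hξR | hRξ
  · rw [indicator_of_mem (mem_Ioc.2 ⟨hξ, hξR⟩)]
    refine mul_le_mul_of_nonneg_left (Real.rpow_le_rpow (le_max_right _ _) ?_ (by linarith))
      (sq_nonneg ξ)
    have : 0 ≤ ε * √(1 + ξ ^ 2) := mul_nonneg (hc.trans_le hcε).le (Real.sqrt_nonneg _)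
    exact max_le (by linarith) hα
  · rw [indicator_of_notMem fun h => h.2.not_gt hRξ]
    refine (gIntegrand_eq_zero hσ ?_).le
    rw [div_lt_iff₀ hc] at hRξ
    nlinarith

lemma indicator_le_gIntegrand (hσ : -1 < σ) (hε : 0 ≤ ε) {R m : ℝ} (hm : 0 ≤ m)
    (hRm : ε * √(1 + R ^ 2) + m ≤ α) (ξ : ℝ) :
    (Ioc 0 R).indicator (fun ξ => ξ ^ 2 * m ^ (σ + 1)) ξ ≤ gIntegrand σ α ε ξ := by
  by_cases hξ : ξ ∈ Ioc 0 R
  · rw [indicator_of_mem hξ]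
    have hsqrt : √(1 + ξ ^ 2) ≤ √(1 + R ^ 2) :=
      Real.sqrt_le_sqrt (by nlinarith [hξ.1, hξ.2])
    have : m ≤ α - ε * √(1 + ξ ^ 2) := by nlinarith [mul_le_mul_of_nonneg_left hsqrt hε]
    exact mul_le_mul_of_nonneg_left
      (Real.rpow_le_rpow hm (this.trans (le_max_left _ _)) (by linarith)) (sq_nonneg ξ)
  · rw [indicator_of_notMem hξ]
    exact gIntegrand_nonneg σ α ε ξ

lemma integrableOn_gIntegrand (hσ : -1 < σ) (hα : 0 ≤ α) (hε : 0 < ε) :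
    IntegrableOn (gIntegrand σ α ε) (Ioi 0) := by
  refine (integrable_indicator_Ioc_sq_mul (α / ε) (α ^ (σ + 1))).integrableOn.mono'
    (continuous_gIntegrand_uncurry hσ |>.comp (Continuous.prodMk_right ε)).aestronglyMeasurable
    (ae_restrict_of_forall_mem measurableSet_Ioi fun ξ hξ => ?_)
  rw [Real.norm_of_nonneg (gIntegrand_nonneg σ α ε ξ)]
  exact gIntegrand_le_indicator hσ hα hε le_rfl hξ

lemma Gfun_le (hσ : -1 < σ) (hα : 0 ≤ α) (hε : 0 < ε) :
    Gfun σ α ε ≤ α ^ (σ + 1) * (α / ε) ^ 3 / 3 := by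
  rw [Gfun_eq_setIntegral_gIntegrand,
    ← setIntegral_Ioi_indicator_Ioc_sq_mul (div_nonneg hα hε.le)]
  exact setIntegral_mono_on (integrableOn_gIntegrand hσ hα hε)
    (integrable_indicator_Ioc_sq_mul _ _).integrableOn measurableSet_Ioi
    fun ξ hξ => gIntegrand_le_indicator hσ hα hε le_rfl hξ

lemma le_Gfun (hσ : -1 < σ) (hε : 0 < ε) {R m : ℝ} (hR : 0 ≤ R) (hm : 0 ≤ m)
    (hRm : ε * √(1 + R ^ 2) + m ≤ α) :
    m ^ (σ + 1) * R ^ 3 / 3 ≤ Gfun σ α ε := by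
  have hα : 0 ≤ α := by nlinarith [Real.sqrt_nonneg (1 + R ^ 2)]
  rw [Gfun_eq_setIntegral_gIntegrand, ← setIntegral_Ioi_indicator_Ioc_sq_mul hR]
  exact setIntegral_mono_on (integrable_indicator_Ioc_sq_mul _ _).integrableOn
    (integrableOn_gIntegrand hσ hα hε) measurableSet_Ioi
    fun ξ _ => indicator_le_gIntegrand hσ hε.le hm hRm ξ

lemma Gfun_eq_zero (hσ : -1 < σ) (hα : 0 ≤ α) (hαε : α ≤ ε) : Gfun σ α ε = 0 := by
  have hvanish (ξ : ℝ) : gIntegrand σ α ε ξ = 0 := by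
    refine gIntegrand_eq_zero hσ ?_
    have : 1 ≤ √(1 + ξ ^ 2) := Real.one_le_sqrt.2 (by nlinarith)
    nlinarith
  simp only [Gfun_eq_setIntegral_gIntegrand, hvanish, integral_zero]

/-- Take `m = (α - ε) / 2` and `R = m / ε`, using `√(1 + R²) ≤ 1 + R`. -/
lemma Gfun_pos (hσ : -1 < σ) (hε : 0 < ε) (hεα : ε < α) : 0 < Gfun σ α ε := by
  set m := (α - ε) / 2 with hm_def
  have hm : 0 < m := by linarith
  have hR : 0 < m / ε := div_pos hm hε
  have hsqrt : √(1 + (m / ε) ^ 2) ≤ 1 + m / ε :=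
    Real.sqrt_le_left (by positivity) |>.2 (by nlinarith)
  have hRm : ε * √(1 + (m / ε) ^ 2) + m ≤ α := by
    have : ε * (1 + m / ε) = ε + m := by field_simp
    nlinarith [mul_le_mul_of_nonneg_left hsqrt hε.le]
  exact lt_of_lt_of_le (by positivity) (le_Gfun hσ hε hR.le hm.le hRm)

lemma continuousOn_Gfun (hσ : -1 < σ) (hα : 0 ≤ α) : ContinuousOn (Gfun σ α) (Ioi 0) := by
  intro ε₀ hε₀
  have hc : 0 < ε₀ / 2 := half_pos hε₀
  refine ContinuousAt.continuousWithinAt ?_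
  change ContinuousAt (fun ε => ∫ ξ in Ioi 0, gIntegrand σ α ε ξ) ε₀
  refine continuousAt_of_dominated
    (bound := (Ioc 0 (α / (ε₀ / 2))).indicator fun ξ => ξ ^ 2 * α ^ (σ + 1))
    (.of_forall fun ε =>
      (continuous_gIntegrand_uncurry hσ |>.comp (Continuous.prodMk_right ε)).aestronglyMeasurable)
    ?_ (integrable_indicator_Ioc_sq_mul _ _).integrableOn
    (.of_forall fun ξ =>
      (continuous_gIntegrand_uncurry hσ |>.comp (Continuous.prodMk_left ξ)).continuousAt)
  filter_upwards [eventually_gt_nhds (half_lt_self hε₀)] with ε hε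
  refine ae_restrict_of_forall_mem measurableSet_Ioi fun ξ hξ => ?_
  rw [Real.norm_of_nonneg (gIntegrand_nonneg σ α ε ξ)]
  exact gIntegrand_le_indicator hσ hα hc hε.le hξ

lemma rpow_neg_three_mul_rpow_four_add (σ : ℝ) (hα : 0 < α) (hε : 0 < ε) :
    ε ^ (-(3:ℝ)) * α ^ (4 + σ) = α ^ (σ + 1) * (α / ε) ^ 3 := by
  rw [show 4 + σ = σ + 1 + (3:ℕ) by push_cast; ring, Real.rpow_add hα, Real.rpow_natCast,
    show (-(3:ℝ)) = -(3:ℕ) by norm_num, Real.rpow_neg hε.le, Real.rpow_natCast, div_pow]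
  field_simp

lemma Gfun_le_mul_rpow (hσ : -1 < σ) (hα : 0 < α) (hε : 0 < ε) :
    Gfun σ α ε ≤ 1 / 3 * ε ^ (-(3:ℝ)) * α ^ (4 + σ) := by
  rw [mul_assoc, rpow_neg_three_mul_rpow_four_add σ hα hε]
  linarith [Gfun_le hσ hα.le hε]

/-- Take `R = α / (2ε)` and `m = α / 8`: then `ε √(1 + R²) = √(ε² + α²/4) ≤ 7α/8`
because `ε² ≤ α²/2`. -/
lemma mul_rpow_le_Gfun (hσ : -1 < σ) (hε : 0 < ε) (hεα : ε ≤ α / √2) :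
    (1 / 8) ^ (σ + 1) / 24 * ε ^ (-(3:ℝ)) * α ^ (4 + σ) ≤ Gfun σ α ε := by
  have hsqrt2 : 0 < √2 := by positivity
  have hα : 0 < α := by
    have := hε.trans_le hεα
    rwa [lt_div_iff₀ hsqrt2, zero_mul] at this
  have hεsq : 2 * ε ^ 2 ≤ α ^ 2 := by
    have h := (le_div_iff₀ hsqrt2).1 hεα
    nlinarith [Real.sq_sqrt (show (0:ℝ) ≤ 2 by norm_num), mul_self_le_mul_self (by positivity) h]
  set R := α / (2 * ε) with hR_def
  have hεR : ε * R = α / 2 := by rw [hR_def]; field_simp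
  have hRm : ε * √(1 + R ^ 2) + α / 8 ≤ α := by
    have hs := Real.sq_sqrt (show 0 ≤ 1 + R ^ 2 by positivity)
    have : ε * √(1 + R ^ 2) ≤ 7 * α / 8 :=
      pow_le_pow_iff_left₀ (by positivity) (by positivity) two_ne_zero |>.1
        (by nlinarith)
    linarith
  have key := le_Gfun hσ hε (by positivity) (by positivity) hRm
  rw [mul_assoc, rpow_neg_three_mul_rpow_four_add σ hα hε]
  calc (1 / 8) ^ (σ + 1) / 24 * (α ^ (σ + 1) * (α / ε) ^ 3)
      = (α / 8) ^ (σ + 1) * R ^ 3 / 3 := by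
        rw [div_eq_mul_one_div α 8, Real.mul_rpow hα.le (by norm_num), hR_def]
        field_simp
        ring
    _ ≤ Gfun σ α ε := key

end

/-- On `(0, α/√2]`, `G(ε) ∼ ε^{−3} α^{4+σ}` with α-independent constants; moreover
`G > 0` on `(0,α)`, `G = 0` on `[α,∞)`, and `G` is continuous on `(0,∞)`. -/
theorem stmt_10 (σ : ℝ) (hσ : σ ∈ Set.Ioo (0:ℝ) (3/2)) :
    (∃ c₁ c₂ : ℝ, 0 < c₁ ∧ c₁ < c₂ ∧ ∀ α : ℝ, 0 < α →
      ∀ ε ∈ Set.Ioc (0:ℝ) (α / Real.sqrt 2),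
        c₁ * ε ^ (-(3:ℝ)) * α ^ (4 + σ) ≤ Gfun σ α ε ∧
        Gfun σ α ε ≤ c₂ * ε ^ (-(3:ℝ)) * α ^ (4 + σ)) ∧
    (∀ α : ℝ, 0 < α → ∀ ε ∈ Set.Ioo (0:ℝ) α, 0 < Gfun σ α ε) ∧
    (∀ α : ℝ, 0 < α → ∀ ε : ℝ, α ≤ ε → Gfun σ α ε = 0) ∧
    (∀ α : ℝ, 0 < α → ContinuousOn (Gfun σ α) (Set.Ioi 0)) := by
  have hσ' : -1 < σ := by linarith [hσ.1]
  have hc₁c₂ : (1 / 8 : ℝ) ^ (σ + 1) / 24 < 1 / 3 := by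
    have := Real.rpow_le_one (by norm_num : (0:ℝ) ≤ 1 / 8) (by norm_num)
      (by linarith : (0:ℝ) ≤ σ + 1)
    linarith
  refine ⟨⟨(1 / 8) ^ (σ + 1) / 24, 1 / 3, by positivity, hc₁c₂, fun α hα ε hε => ?_⟩,
    fun α _ ε hε => Gfun_pos hσ' hε.1 hε.2,
    fun α hα ε hαε => Gfun_eq_zero hσ' hα.le hαε,
    fun α hα => continuousOn_Gfun hσ' hα.le⟩
  exact ⟨mul_rpow_le_Gfun hσ' hε.1 hε.2, Gfun_le_mul_rpow hσ' hα hε.1⟩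
end

section
/- With G(ε) = ∫₀^∞ ξ² (max(α − ε√(1+ξ²), 0))^{σ+1} dξ for σ ∈ (0,3/2) and α > 0, G is differentiable on (0, α] with G'(ε) = −(σ+1) ∫₀^∞ ξ² √(1+ξ²) (max(α − ε√(1+ξ²), 0))^σ dξ, and there exist α-independent constants c₂ > c₁ > 0 with c₁ α^{−3/2}(α−ε)^{3/2+σ} ≤ −G'(ε) ≤ c₂ α^{−3/2}(α−ε)^{3/2+σ} for ε ∈ [α/√2, α]. -/
/-- `G'(ε) = −(σ+1) ∫₀^∞ ξ² √(1+ξ²) (max(α − ε√(1+ξ²), 0))^σ dξ`. -/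
noncomputable def GderivFun (σ α ε : ℝ) : ℝ :=
  -(σ + 1) * ∫ ξ in Set.Ioi (0:ℝ),
    ξ ^ 2 * Real.sqrt (1 + ξ ^ 2) * (max (α - ε * Real.sqrt (1 + ξ ^ 2)) 0) ^ σ

open MeasureTheory Real Set Filter Topology

theorem hasDerivAt_max_zero_rpow {p : ℝ} (hp : 0 < p) (y : ℝ) :
    HasDerivAt (fun y : ℝ => max y 0 ^ (p + 1)) ((p + 1) * max y 0 ^ p) y := by
  refine hasDerivAt_of_hasDerivAt_of_ne' (f := fun y : ℝ => max y 0 ^ (p + 1))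
    (g := fun y : ℝ => (p + 1) * max y 0 ^ p) (x := 0) (fun z hz => ?_) ?_ ?_ y
  · rcases hz.lt_or_gt with hz | hz
    · have hzero : (fun y : ℝ => max y 0 ^ (p + 1)) =ᶠ[𝓝 z] fun _ => 0 := by
        filter_upwards [eventually_lt_nhds hz] with w hw
        rw [max_eq_right hw.le, zero_rpow (by linarith)]
      rw [max_eq_right hz.le, zero_rpow hp.ne', mul_zero]
      exact (hasDerivAt_const z 0).congr_of_eventuallyEq hzero
    · have hpos : (fun y : ℝ => max y 0 ^ (p + 1)) =ᶠ[𝓝 z] fun w => w ^ (p + 1) := by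
        filter_upwards [eventually_gt_nhds hz] with w hw
        rw [max_eq_left hw.le]
      rw [max_eq_left hz.le]
      simpa using (hasDerivAt_rpow_const (p := p + 1) (Or.inl hz.ne')).congr_of_eventuallyEq hpos
  · exact ((continuous_id.max continuous_const).rpow_const
      fun _ => Or.inr (by linarith)).continuousAt
  · exact (continuous_const.mul ((continuous_id.max continuous_const).rpow_const
      fun _ => Or.inr hp.le)).continuousAt

theorem hasDerivAt_max_sub_mul_rpow {p : ℝ} (hp : 0 < p) (α s ε : ℝ) :
    HasDerivAt (fun ε : ℝ => max (α - ε * s) 0 ^ (p + 1))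
      (-(p + 1) * s * max (α - ε * s) 0 ^ p) ε := by
  have h := (hasDerivAt_max_zero_rpow hp (α - ε * s)).comp ε
    ((hasDerivAt_mul_const s).const_sub α)
  exact h.congr_deriv (by ring)

theorem max_sub_mul_sqrt_eq_zero {α ε ξ : ℝ} (hε : 0 < ε) (hξ : α / ε ≤ |ξ|) :
    max (α - ε * √(1 + ξ ^ 2)) 0 = 0 := by
  have hα : α ≤ ε * |ξ| := by rwa [div_le_iff₀' hε] at hξ
  have hs : |ξ| ≤ √(1 + ξ ^ 2) := abs_le_sqrt (by linarith)
  exact max_eq_right (by nlinarith)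

theorem integrable_mul_max_sub_mul_sqrt_rpow {g : ℝ → ℝ} (hg : Continuous g) (α : ℝ)
    {ε q : ℝ} (hε : 0 < ε) (hq : 0 < q) :
    Integrable (fun ξ => g ξ * max (α - ε * √(1 + ξ ^ 2)) 0 ^ q) := by
  refine (hg.mul ?_).integrable_of_hasCompactSupport ?_
  · exact (continuous_const.sub (continuous_const.mul (by fun_prop))).max continuous_const
      |>.rpow_const fun _ => Or.inr hq.le
  · refine HasCompactSupport.intro (isCompact_closedBall 0 (α / ε)) fun ξ hξ => ?_
    rw [Metric.mem_closedBall, dist_zero_right, norm_eq_abs, not_le] at hξ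
    simp only [Pi.mul_apply, max_sub_mul_sqrt_eq_zero hε hξ.le, zero_rpow hq.ne', mul_zero]

theorem hasDerivAt_Gfun {σ α ε : ℝ} (hσ : 0 < σ) (hε : 0 < ε) :
    HasDerivAt (Gfun σ α) (GderivFun σ α ε) ε := by
  set s : ℝ → ℝ := fun ξ => √(1 + ξ ^ 2)
  have hbound : ∀ ξ, ∀ x ∈ Metric.ball ε (ε / 2),
      ‖-(σ + 1) * (ξ ^ 2 * s ξ) * max (α - x * s ξ) 0 ^ σ‖ ≤
        (σ + 1) * (ξ ^ 2 * s ξ) * max (α - ε / 2 * s ξ) 0 ^ σ := by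
    intro ξ x hx
    rw [Metric.mem_ball, dist_eq] at hx
    have hmono : max (α - x * s ξ) 0 ≤ max (α - ε / 2 * s ξ) 0 :=
      max_le_max (by nlinarith [(abs_lt.mp hx).1, sqrt_nonneg (1 + ξ ^ 2)]) le_rfl
    rw [norm_eq_abs, abs_mul, abs_mul, abs_neg, abs_of_nonneg (by positivity : 0 ≤ σ + 1),
      abs_of_nonneg (by positivity : 0 ≤ ξ ^ 2 * s ξ),
      abs_of_nonneg (rpow_nonneg (le_max_right _ _) _)]
    gcongr
  have hF : ∀ᶠ x in 𝓝 ε, AEStronglyMeasurable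
      (fun ξ : ℝ => ξ ^ 2 * max (α - x * s ξ) 0 ^ (σ + 1)) (volume.restrict (Ioi 0)) := by
    filter_upwards [eventually_gt_nhds hε] with x hx
    exact (integrable_mul_max_sub_mul_sqrt_rpow (continuous_pow 2) α hx
      (by linarith)).aestronglyMeasurable.restrict
  have h := hasDerivAt_integral_of_dominated_loc_of_deriv_le
    (μ := volume.restrict (Ioi 0)) (Metric.ball_mem_nhds ε (half_pos hε)) hF
    (integrable_mul_max_sub_mul_sqrt_rpow (continuous_pow 2) α hε (by linarith)).restrict
    (integrable_mul_max_sub_mul_sqrt_rpow (g := fun ξ => -(σ + 1) * (ξ ^ 2 * s ξ))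
      (by fun_prop) α hε hσ).aestronglyMeasurable.restrict
    (Eventually.of_forall hbound)
    (integrable_mul_max_sub_mul_sqrt_rpow (by fun_prop) α (half_pos hε) hσ).restrict
    (Eventually.of_forall fun ξ x _ =>
      ((hasDerivAt_max_sub_mul_rpow hσ α (s ξ) x).const_mul (ξ ^ 2)).congr_deriv (by ring))
  refine (h.2 : HasDerivAt (Gfun σ α) _ ε).congr_deriv ?_
  simp only [GderivFun, mul_assoc, integral_const_mul]
  rfl

theorem setIntegral_Ioc_const_mul_sq {b : ℝ} (hb : 0 ≤ b) (c : ℝ) :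
    ∫ ξ in Ioc 0 b, c * ξ ^ 2 = c * (b ^ 3 / 3) := by
  rw [← intervalIntegral.integral_of_le hb, intervalIntegral.integral_const_mul, integral_pow]
  ring

theorem const_mul_cube_div_three_le_setIntegral_Ioi {f : ℝ → ℝ} {b c : ℝ} (hb : 0 ≤ b)
    (hf : IntegrableOn f (Ioi 0)) (hf0 : ∀ ξ ∈ Ioi 0, 0 ≤ f ξ)
    (hcf : ∀ ξ ∈ Ioc 0 b, c * ξ ^ 2 ≤ f ξ) :
    c * (b ^ 3 / 3) ≤ ∫ ξ in Ioi 0, f ξ :=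
  calc c * (b ^ 3 / 3) = ∫ ξ in Ioc 0 b, c * ξ ^ 2 := (setIntegral_Ioc_const_mul_sq hb c).symm
    _ ≤ ∫ ξ in Ioc 0 b, f ξ :=
      setIntegral_mono_on (by fun_prop : Continuous fun ξ : ℝ => c * ξ ^ 2).integrableOn_Ioc
        (hf.mono_set Ioc_subset_Ioi_self) measurableSet_Ioc hcf
    _ ≤ ∫ ξ in Ioi 0, f ξ :=
      setIntegral_mono_set hf (ae_restrict_of_forall_mem measurableSet_Ioi hf0)
        Ioc_subset_Ioi_self.eventuallyLE

theorem setIntegral_Ioi_le_const_mul_cube_div_three {f : ℝ → ℝ} {b c : ℝ} (hb : 0 ≤ b)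
    (hf : IntegrableOn f (Ioi 0)) (hf0 : ∀ ξ ∈ Ioi b, f ξ = 0)
    (hfc : ∀ ξ ∈ Ioc 0 b, f ξ ≤ c * ξ ^ 2) :
    ∫ ξ in Ioi 0, f ξ ≤ c * (b ^ 3 / 3) :=
  calc ∫ ξ in Ioi 0, f ξ = ∫ ξ in Ioc 0 b, f ξ := by
        rw [← Ioc_union_Ioi_eq_Ioi hb, setIntegral_union (Ioc_disjoint_Ioi le_rfl)
          measurableSet_Ioi (hf.mono_set Ioc_subset_Ioi_self) (hf.mono_set (Ioi_subset_Ioi hb)),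
          setIntegral_eq_zero_of_forall_eq_zero hf0, add_zero]
    _ ≤ ∫ ξ in Ioc 0 b, c * ξ ^ 2 :=
      setIntegral_mono_on (hf.mono_set Ioc_subset_Ioi_self)
        (by fun_prop : Continuous fun ξ : ℝ => c * ξ ^ 2).integrableOn_Ioc measurableSet_Ioc hfc
    _ = c * (b ^ 3 / 3) := setIntegral_Ioc_const_mul_sq hb c

theorem rpow_mul_sqrt_div_pow_three {x a σ : ℝ} (hx : 0 ≤ x) (ha : 0 < a) (hσ : 0 ≤ σ) :
    x ^ σ * √(x / a) ^ 3 = a ^ (-(3 / 2) : ℝ) * x ^ (3 / 2 + σ) := by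
  have h : √(x / a) ^ 3 = (x / a) ^ (3 / 2 : ℝ) := by
    rw [sqrt_eq_rpow, ← rpow_natCast, ← rpow_mul (by positivity)]
    norm_num
  rw [h, div_rpow hx ha.le, rpow_neg ha.le, rpow_add' hx (by positivity)]
  ring

theorem sub_div_two_le_sub_mul_sqrt {α ε ξ : ℝ} (hε : 0 ≤ ε) (hεα : ε ≤ α)
    (hξ : α * ξ ^ 2 ≤ α - ε) : (α - ε) / 2 ≤ α - ε * √(1 + ξ ^ 2) := by
  have hs : √(1 + ξ ^ 2) ≤ 1 + ξ ^ 2 / 2 := sqrt_le_iff.mpr ⟨by positivity, by nlinarith⟩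
  nlinarith [mul_le_mul_of_nonneg_left hs hε, mul_le_mul_of_nonneg_right hεα (sq_nonneg ξ)]

theorem sq_lt_and_sqrt_lt_two_of_sub_mul_sqrt_pos {α ε ξ : ℝ} (hε : 0 < ε) (hεα : ε ≤ α)
    (hα : α ^ 2 ≤ 2 * ε ^ 2) (h : 0 < α - ε * √(1 + ξ ^ 2)) :
    α * ξ ^ 2 < 4 * (α - ε) ∧ √(1 + ξ ^ 2) < 2 := by
  have hs := sq_sqrt (by positivity : (0 : ℝ) ≤ 1 + ξ ^ 2)
  have hs0 := sqrt_nonneg (1 + ξ ^ 2)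
  have hεs : ε ^ 2 * (1 + ξ ^ 2) < α ^ 2 := by
    have := mul_self_lt_mul_self (by positivity) (by linarith : ε * √(1 + ξ ^ 2) < α)
    nlinarith
  constructor
  · have : α ^ 2 * ξ ^ 2 < 4 * α * (α - ε) := by nlinarith
    nlinarith
  · nlinarith

theorem sq_mul_sqrt_mul_max_sub_mul_sqrt_rpow_le {σ α ε ξ : ℝ} (hσ : 0 < σ) (hε : 0 < ε)
    (hεα : ε ≤ α) (hα : α ^ 2 ≤ 2 * ε ^ 2) :
    ξ ^ 2 * √(1 + ξ ^ 2) * max (α - ε * √(1 + ξ ^ 2)) 0 ^ σ ≤ 2 * (α - ε) ^ σ * ξ ^ 2 := by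
  by_cases hpos : 0 < α - ε * √(1 + ξ ^ 2)
  · have hs2 := (sq_lt_and_sqrt_lt_two_of_sub_mul_sqrt_pos hε hεα hα hpos).2
    have hs1 : 1 ≤ √(1 + ξ ^ 2) := one_le_sqrt.mpr (by nlinarith)
    have hmax : max (α - ε * √(1 + ξ ^ 2)) 0 ≤ α - ε := max_le (by nlinarith) (by linarith)
    calc ξ ^ 2 * √(1 + ξ ^ 2) * max (α - ε * √(1 + ξ ^ 2)) 0 ^ σ
        ≤ ξ ^ 2 * 2 * (α - ε) ^ σ := by gcongr
      _ = 2 * (α - ε) ^ σ * ξ ^ 2 := by ring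
  · rw [max_eq_right (not_lt.mp hpos), zero_rpow hσ.ne', mul_zero]
    have : 0 ≤ α - ε := by linarith
    positivity

theorem neg_GderivFun_eq (σ α ε : ℝ) :
    -GderivFun σ α ε = (σ + 1) *
      ∫ ξ in Ioi 0, ξ ^ 2 * √(1 + ξ ^ 2) * max (α - ε * √(1 + ξ ^ 2)) 0 ^ σ := by
  rw [GderivFun]
  ring

theorem le_neg_GderivFun {σ α ε : ℝ} (hσ : 0 < σ) (hε : 0 < ε) (hεα : ε ≤ α) :
    (σ + 1) / (3 * 2 ^ σ) * α ^ (-(3 / 2) : ℝ) * (α - ε) ^ (3 / 2 + σ) ≤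
      -GderivFun σ α ε := by
  have hα : 0 < α := hε.trans_le hεα
  have hαε : 0 ≤ α - ε := sub_nonneg.mpr hεα
  have hint : ((α - ε) / 2) ^ σ * (√((α - ε) / α) ^ 3 / 3) ≤
      ∫ ξ in Ioi 0, ξ ^ 2 * √(1 + ξ ^ 2) * max (α - ε * √(1 + ξ ^ 2)) 0 ^ σ := by
    refine const_mul_cube_div_three_le_setIntegral_Ioi (sqrt_nonneg _)
      (integrable_mul_max_sub_mul_sqrt_rpow (by fun_prop) α hε hσ).integrableOn
      (fun ξ _ => by positivity) ?_
    rintro ξ ⟨hξ0, hξb⟩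
    have hξ : α * ξ ^ 2 ≤ α - ε := by
      have := (le_sqrt hξ0.le (div_nonneg hαε hα.le)).mp hξb
      rwa [le_div_iff₀ hα, mul_comm] at this
    have hs : 1 ≤ √(1 + ξ ^ 2) := one_le_sqrt.mpr (by nlinarith)
    have hmax : ((α - ε) / 2) ^ σ ≤ max (α - ε * √(1 + ξ ^ 2)) 0 ^ σ := by
      gcongr
      exact le_max_of_le_left (sub_div_two_le_sub_mul_sqrt hε.le hεα hξ)
    calc ((α - ε) / 2) ^ σ * ξ ^ 2 = ξ ^ 2 * 1 * ((α - ε) / 2) ^ σ := by ring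
      _ ≤ _ := by gcongr
  calc (σ + 1) / (3 * 2 ^ σ) * α ^ (-(3 / 2) : ℝ) * (α - ε) ^ (3 / 2 + σ)
      = (σ + 1) * (((α - ε) / 2) ^ σ * (√((α - ε) / α) ^ 3 / 3)) := by
        rw [div_rpow hαε zero_le_two]
        linear_combination (-(σ + 1) / (3 * 2 ^ σ)) * rpow_mul_sqrt_div_pow_three hαε hα hσ.le
    _ ≤ -GderivFun σ α ε := by
        rw [neg_GderivFun_eq]
        gcongr

theorem neg_GderivFun_le {σ α ε : ℝ} (hσ : 0 < σ) (hε : 0 < ε) (hεα : ε ≤ α)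
    (hα : α ^ 2 ≤ 2 * ε ^ 2) :
    -GderivFun σ α ε ≤ 16 * (σ + 1) / 3 * α ^ (-(3 / 2) : ℝ) * (α - ε) ^ (3 / 2 + σ) := by
  have hα0 : 0 < α := hε.trans_le hεα
  have hαε : 0 ≤ α - ε := sub_nonneg.mpr hεα
  have hint : ∫ ξ in Ioi 0, ξ ^ 2 * √(1 + ξ ^ 2) * max (α - ε * √(1 + ξ ^ 2)) 0 ^ σ ≤
      2 * (α - ε) ^ σ * ((2 * √((α - ε) / α)) ^ 3 / 3) := by
    refine setIntegral_Ioi_le_const_mul_cube_div_three (by positivity)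
      (integrable_mul_max_sub_mul_sqrt_rpow (by fun_prop) α hε hσ).integrableOn
      (fun ξ hξ => ?_) fun ξ _ => sq_mul_sqrt_mul_max_sub_mul_sqrt_rpow_le hσ hε hεα hα
    have ht := sq_sqrt (div_nonneg hαε hα0.le)
    have hξ : 4 * (α - ε) < α * ξ ^ 2 := by
      have : 4 * ((α - ε) / α) < ξ ^ 2 := by
        nlinarith [sqrt_nonneg ((α - ε) / α), mem_Ioi.mp hξ]
      rw [mul_div_assoc', div_lt_iff₀ hα0] at this
      linarith
    have hmax : max (α - ε * √(1 + ξ ^ 2)) 0 = 0 :=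
      max_eq_right (not_lt.mp fun hpos =>
        (sq_lt_and_sqrt_lt_two_of_sub_mul_sqrt_pos hε hεα hα hpos).1.not_gt hξ)
    rw [hmax, zero_rpow hσ.ne', mul_zero]
  calc -GderivFun σ α ε
      ≤ (σ + 1) * (2 * (α - ε) ^ σ * ((2 * √((α - ε) / α)) ^ 3 / 3)) := by
        rw [neg_GderivFun_eq]
        gcongr
    _ = 16 * (σ + 1) / 3 * α ^ (-(3 / 2) : ℝ) * (α - ε) ^ (3 / 2 + σ) := by
        linear_combination 16 * (σ + 1) / 3 * rpow_mul_sqrt_div_pow_three hαε hα0 hσ.le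

/-- `G` is differentiable on `(0,α]` with the stated derivative, and
`−G'(ε) ∼ α^{−3/2} (α−ε)^{3/2+σ}` on `[α/√2, α]` with α-independent constants. -/
theorem stmt_11 (σ : ℝ) (hσ : σ ∈ Set.Ioo (0:ℝ) (3/2)) :
    (∀ α : ℝ, 0 < α → ∀ ε ∈ Set.Ioc (0:ℝ) α,
      HasDerivAt (Gfun σ α) (GderivFun σ α ε) ε) ∧
    (∃ c₁ c₂ : ℝ, 0 < c₁ ∧ c₁ < c₂ ∧ ∀ α : ℝ, 0 < α →
      ∀ ε ∈ Set.Icc (α / Real.sqrt 2) α,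
        c₁ * α ^ (-(3/2) : ℝ) * (α - ε) ^ (3/2 + σ) ≤ -(GderivFun σ α ε) ∧
        -(GderivFun σ α ε) ≤ c₂ * α ^ (-(3/2) : ℝ) * (α - ε) ^ (3/2 + σ)) := by
  have hσ0 := hσ.1
  refine ⟨fun α _ ε hε => hasDerivAt_Gfun hσ0 hε.1,
    (σ + 1) / (3 * 2 ^ σ), 16 * (σ + 1) / 3, by positivity, ?_, fun α hα ε ⟨hε, hεα⟩ => ?_⟩
  · have h2σ : (1 : ℝ) ≤ 2 ^ σ := one_le_rpow one_le_two hσ0.le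
    calc (σ + 1) / (3 * 2 ^ σ) ≤ (σ + 1) / 3 := by gcongr; linarith
      _ < 16 * (σ + 1) / 3 := by linarith
  · have hs2 := sq_sqrt (zero_le_two : (0 : ℝ) ≤ 2)
    have hαε : α ≤ ε * √2 := (div_le_iff₀ (by positivity)).mp hε
    have hε0 : 0 < ε := lt_of_lt_of_le (by positivity) hε
    exact ⟨le_neg_GderivFun hσ0 hε0 hεα,
      neg_GderivFun_le hσ0 hε0 hεα (by nlinarith [sqrt_nonneg 2])⟩
end

section
/- With G as above and σ ∈ (0,3/2), α > 0: for every q ∈ [1/√2, 1) there exists C_q > 0 such that |G''(ε) − G''(ε̃)| ≤ C_q α^{−(2−σ)} |ε − ε̃| for all ε, ε̃ ∈ [α/√2, qα]. -/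
/-!
Since `α − ε√(1+ξ²) = α(1 − (ε/α)√(1+ξ²))`, `G''` at `(α, ε)` is `α^{σ−1}` times `G''` at
`(1, ε/α)`, so everything reduces to a Lipschitz bound for `l ↦ G''(1, l)` on `[1/√2, q]`.

For `σ < 1` the integrand `ξ²(1+ξ²)(1 − l√(1+ξ²))₊^{σ−1}` has a singularity at the cutoff
`b(l) = √(1−l²)/l` that is not Lipschitz in `l`. Integrating by parts against the derivative of
`ξ(1+ξ²)^{3/2}` gives `l · G''(1, l) = (σ+1) ∫₀¹ (1+4ξ²)√(1+ξ²)(1 − l√(1+ξ²))₊^σ dξ`, where the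
power is now `σ > 0`. By the mean value theorem the increments of this integral in `l` are
controlled by `∫₀¹ (1 − l√(1+ξ²))₊^{σ−1} dξ`, which is bounded uniformly in `l ≤ q` because the
profile vanishes at least linearly at the cutoff, with slope `≥ b(q)/4`.
-/

/-- `G''(ε) = σ(σ+1) ∫₀^∞ ξ² (1+ξ²) (max(α − ε√(1+ξ²), 0))^{σ−1} dξ`. -/
noncomputable def Gderiv2Fun (σ α ε : ℝ) : ℝ :=
  σ * (σ + 1) * ∫ ξ in Set.Ioi (0:ℝ),
    ξ ^ 2 * (1 + ξ ^ 2) * (max (α - ε * Real.sqrt (1 + ξ ^ 2)) 0) ^ (σ - 1)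

open Real MeasureTheory Set

theorem rpow_le_rpow_add_rpow_of_mem_Icc {p a b c : ℝ} (hb : 0 < b) (hc : c ∈ Icc b a) :
    c ^ p ≤ a ^ p + b ^ p := by
  rcases le_total p 0 with hp | hp
  · linarith [rpow_le_rpow_of_nonpos hb hc.1 hp, rpow_nonneg (hb.le.trans (hc.1.trans hc.2)) p]
  · linarith [rpow_le_rpow (hb.le.trans hc.1) hc.2 hp, rpow_nonneg hb.le p]

theorem rpow_sub_rpow_le {σ a b : ℝ} (hσ : 0 ≤ σ) (hb : 0 < b) (hba : b ≤ a) :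
    a ^ σ - b ^ σ ≤ σ * (a ^ (σ - 1) + b ^ (σ - 1)) * (a - b) := by
  have hpos : ∀ x ∈ Icc b a, x ≠ 0 := fun x hx => (hb.trans_le hx.1).ne'
  refine (convex_Icc b a).image_sub_le_mul_sub_of_deriv_le
    (fun x hx => (continuousAt_rpow_const x σ (Or.inl (hpos x hx))).continuousWithinAt)
    (fun x hx => ?_) (fun x hx => ?_) b ⟨le_rfl, hba⟩ a ⟨hba, le_rfl⟩ hba
  · rw [interior_Icc] at hx
    exact (hasDerivAt_rpow_const (Or.inl (hpos x (Ioo_subset_Icc_self hx)))).differentiableAt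
      |>.differentiableWithinAt
  · rw [interior_Icc] at hx
    rw [Real.deriv_rpow_const]
    exact mul_le_mul_of_nonneg_left
      (rpow_le_rpow_add_rpow_of_mem_Icc hb (Ioo_subset_Icc_self hx)) hσ

theorem abs_max_rpow_sub_max_rpow_le {σ : ℝ} (hσ : 0 < σ) (a b : ℝ) :
    |max a 0 ^ σ - max b 0 ^ σ| ≤
      (σ + 1) * |a - b| * (max a 0 ^ (σ - 1) + max b 0 ^ (σ - 1)) := by
  wlog hba : b ≤ a generalizing a b
  · rw [abs_sub_comm, abs_sub_comm a, add_comm (max a 0 ^ (σ - 1))]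
    exact this b a (le_of_not_ge hba)
  have hA : 0 ≤ max a 0 := le_max_right a 0
  have hA' : 0 ≤ max a 0 ^ (σ - 1) := rpow_nonneg hA _
  rw [abs_of_nonneg (sub_nonneg.2 (rpow_le_rpow (le_max_right b 0) (max_le_max_right 0 hba)
    hσ.le)), abs_of_nonneg (sub_nonneg.2 hba)]
  rcases le_or_gt b 0 with hb | hb
  · have hAσ : max a 0 ^ σ = max a 0 * max a 0 ^ (σ - 1) := by
      conv_lhs => rw [← add_sub_cancel 1 σ, rpow_add' hA (by simp [hσ.ne']), rpow_one]
    have hAab : max a 0 ≤ a - b := max_le (by linarith) (by linarith)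
    rw [max_eq_right hb, zero_rpow hσ.ne', sub_zero, hAσ]
    calc max a 0 * max a 0 ^ (σ - 1) ≤ (a - b) * max a 0 ^ (σ - 1) :=
          mul_le_mul_of_nonneg_right hAab hA'
      _ ≤ (σ + 1) * (a - b) * (max a 0 ^ (σ - 1) + 0 ^ (σ - 1)) := by
          have h0 : (0 : ℝ) ≤ 0 ^ (σ - 1) := rpow_nonneg le_rfl _
          nlinarith [mul_nonneg (mul_nonneg hσ.le (sub_nonneg.2 hba)) hA',
            mul_nonneg (mul_nonneg (by linarith : (0 : ℝ) ≤ σ + 1) (sub_nonneg.2 hba)) h0]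
  · rw [max_eq_left hb.le, max_eq_left (hb.le.trans hba)]
    have := rpow_sub_rpow_le hσ.le hb hba
    nlinarith [rpow_nonneg hb.le (σ - 1), rpow_nonneg (hb.le.trans hba) (σ - 1)]

theorem rpow_le_one_add_rpow {p x y : ℝ} (hy : 0 < y) (hyx : y ≤ x) (hx : x ≤ 1) :
    x ^ p ≤ 1 + y ^ p := by
  rcases le_total p 0 with hp | hp
  · linarith [rpow_le_rpow_of_nonpos hy hyx hp, zero_le_one (α := ℝ)]
  · linarith [rpow_le_one (hy.le.trans hyx) hx hp, rpow_nonneg hy.le p]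

theorem intervalIntegrable_rpow_sub_left {p : ℝ} (b : ℝ) (hp : -1 < p) :
    IntervalIntegrable (fun ξ => (b - ξ) ^ p) volume 0 b := by
  simpa using
    ((intervalIntegral.intervalIntegrable_rpow' (a := 0) (b := b) hp).comp_sub_left b).symm

theorem integral_rpow_sub_left {p : ℝ} (b : ℝ) (hp : -1 < p) :
    ∫ ξ in (0 : ℝ)..b, (b - ξ) ^ p = b ^ (p + 1) / (p + 1) := by
  rw [intervalIntegral.integral_comp_sub_left (fun x => x ^ p), sub_self, sub_zero,
    integral_rpow (Or.inl hp), zero_rpow (by linarith), sub_zero]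

theorem intervalIntegrable_of_forall_eq_zero {f : ℝ → ℝ} {b c : ℝ} (hbc : b ≤ c)
    (hzero : ∀ x ∈ Icc b c, f x = 0) : IntervalIntegrable f volume b c :=
  (intervalIntegrable_const (c := (0 : ℝ))).congr fun x hx => by
    rw [uIoc_of_le hbc] at hx
    exact (hzero x (Ioc_subset_Icc_self hx)).symm

theorem integral_eq_of_forall_eq_zero {f : ℝ → ℝ} {a b c : ℝ}
    (hf : IntervalIntegrable f volume a b) (hbc : b ≤ c) (hzero : ∀ x ∈ Icc b c, f x = 0) :
    ∫ x in a..c, f x = ∫ x in a..b, f x := by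
  have hzero' : EqOn f 0 (uIcc b c) := by rwa [uIcc_of_le hbc]
  rw [← intervalIntegral.integral_add_adjacent_intervals hf
    (intervalIntegrable_of_forall_eq_zero hbc hzero), intervalIntegral.integral_congr hzero']
  simp

theorem abs_div_sub_div_le {a b x y : ℝ} (hx : 0 < x) (hy : 0 < y) (hy1 : y ≤ 1)
    (hxy : 1 ≤ 2 * (x * y)) : |a / x - b / y| ≤ 2 * (|a - b| + |b| * |x - y|) := by
  have hxy0 : 0 < x * y := mul_pos hx hy
  rw [div_sub_div _ _ hx.ne' hy.ne', abs_div, abs_of_pos hxy0, div_le_iff₀ hxy0]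
  have key : a * y - x * b = (a - b) * y + b * (y - x) := by ring
  calc |a * y - x * b| ≤ |a - b| * y + |b| * |x - y| := by
        rw [key, abs_sub_comm x]
        refine (abs_add_le _ _).trans ?_
        rw [abs_mul, abs_mul, abs_of_pos hy]
    _ ≤ |a - b| + |b| * |x - y| := by nlinarith [abs_nonneg (a - b)]
    _ ≤ 2 * (|a - b| + |b| * |x - y|) * (x * y) := by
        nlinarith [abs_nonneg (a - b), abs_nonneg b, abs_nonneg (x - y),
          mul_nonneg (abs_nonneg b) (abs_nonneg (x - y))]

namespace Gderiv2Fun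

-- `cutoff l` is the zero of `ξ ↦ 1 - l√(1+ξ²)` on `[0, ∞)`, beyond which `profile l` vanishes.
noncomputable def profile (l ξ : ℝ) : ℝ := max (1 - l * √(1 + ξ ^ 2)) 0

noncomputable def cutoff (l : ℝ) : ℝ := √(1 - l ^ 2) / l

variable {σ l ξ : ℝ}

theorem pos_of_one_div_sqrt_two_le (h : 1 / √2 ≤ l) : 0 < l := lt_of_lt_of_le (by positivity) h

theorem one_le_two_mul_mul {l' : ℝ} (h : 1 / √2 ≤ l) (h' : 1 / √2 ≤ l') :
    1 ≤ 2 * (l * l') := by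
  have h2 : 1 / √2 * (1 / √2) = 1 / 2 := by
    rw [div_mul_div_comm, one_mul, mul_self_sqrt zero_le_two]
  nlinarith [mul_le_mul h h' (by positivity) (pos_of_one_div_sqrt_two_le h).le]

theorem one_le_two_mul_sq_of_le (h : 1 / √2 ≤ l) : 1 ≤ 2 * l ^ 2 := by
  simpa [sq] using one_le_two_mul_mul h h

theorem cutoff_nonneg (hl : 0 ≤ l) : 0 ≤ cutoff l := div_nonneg (sqrt_nonneg _) hl

theorem cutoff_pos (hl0 : 0 < l) (hl1 : l < 1) : 0 < cutoff l :=
  div_pos (sqrt_pos.2 (by nlinarith)) hl0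

theorem sq_mul_one_add_sq_cutoff (hl0 : 0 < l) (hl1 : l ≤ 1) :
    l ^ 2 * (1 + cutoff l ^ 2) = 1 := by
  rw [cutoff, div_pow, sq_sqrt (by nlinarith)]
  field_simp
  ring

theorem cutoff_le_one (hl0 : 0 < l) (hl : 1 ≤ 2 * l ^ 2) : cutoff l ≤ 1 := by
  rw [cutoff, div_le_one hl0, sqrt_le_left hl0.le]
  linarith

theorem cutoff_le_cutoff_of_le {l' : ℝ} (hl0 : 0 < l) (hll' : l ≤ l') : cutoff l' ≤ cutoff l :=
  div_le_div₀ (sqrt_nonneg _) (sqrt_le_sqrt (by nlinarith)) hl0 hll'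

theorem sq_mul_sqrt_sub_one (hl0 : 0 < l) (hl1 : l ≤ 1) (ξ : ℝ) :
    (l * √(1 + ξ ^ 2)) ^ 2 - 1 = l ^ 2 * (ξ ^ 2 - cutoff l ^ 2) := by
  rw [mul_pow, sq_sqrt (by positivity)]
  linear_combination sq_mul_one_add_sq_cutoff hl0 hl1

theorem mul_sqrt_le_one (hl0 : 0 < l) (hl1 : l ≤ 1) (hξ0 : 0 ≤ ξ) (hξ : ξ ≤ cutoff l) :
    l * √(1 + ξ ^ 2) ≤ 1 := by
  refine (sq_le_one_iff₀ (by positivity)).1 ?_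
  nlinarith [sq_mul_sqrt_sub_one hl0 hl1 ξ,
    mul_nonpos_of_nonneg_of_nonpos (sq_nonneg l) (sub_nonpos.2 (pow_le_pow_left₀ hξ0 hξ 2))]

theorem one_sub_mul_sqrt_pos (hl0 : 0 < l) (hl1 : l ≤ 1) (hξ0 : 0 ≤ ξ) (hξ : ξ < cutoff l) :
    0 < 1 - l * √(1 + ξ ^ 2) := by
  refine sub_pos.2 ((sq_lt_one_iff₀ (by positivity)).1 ?_)
  nlinarith [sq_mul_sqrt_sub_one hl0 hl1 ξ,
    mul_neg_of_pos_of_neg (pow_pos hl0 2) (sub_neg.2 (pow_lt_pow_left₀ hξ hξ0 two_ne_zero))]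

theorem profile_eq_zero (hl0 : 0 < l) (hl1 : l ≤ 1) (hξ : cutoff l ≤ ξ) : profile l ξ = 0 := by
  refine max_eq_right (sub_nonpos.2 ((one_le_sq_iff₀ (by positivity)).1 ?_))
  nlinarith [sq_mul_sqrt_sub_one hl0 hl1 ξ,
    mul_nonneg (sq_nonneg l) (sub_nonneg.2 (pow_le_pow_left₀ (cutoff_nonneg hl0.le) hξ 2))]

theorem cutoff_mul_sub_le (hl0 : 0 < l) (hl : 1 ≤ 2 * l ^ 2) (hl1 : l ≤ 1) (hξ0 : 0 ≤ ξ)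
    (hξ : ξ ≤ cutoff l) : cutoff l * (cutoff l - ξ) / 4 ≤ 1 - l * √(1 + ξ ^ 2) := by
  set b := cutoff l
  set t := l * √(1 + ξ ^ 2)
  have ht : t ≤ 1 := mul_sqrt_le_one hl0 hl1 hξ0 hξ
  have hfactor : (1 - t) * (1 + t) = l ^ 2 * (b ^ 2 - ξ ^ 2) := by
    linear_combination -(sq_mul_sqrt_sub_one hl0 hl1 ξ)
  have hbξ : b * (b - ξ) ≤ b ^ 2 - ξ ^ 2 := by nlinarith
  nlinarith [mul_le_mul_of_nonneg_left (show 1 + t ≤ 2 by linarith) (sub_nonneg.2 ht),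
    mul_le_mul_of_nonneg_right hl (show 0 ≤ b ^ 2 - ξ ^ 2 by nlinarith)]

theorem profile_nonneg (l ξ : ℝ) : 0 ≤ profile l ξ := le_max_right _ _

theorem profile_le_one (hl : 0 ≤ l) (ξ : ℝ) : profile l ξ ≤ 1 :=
  max_le (by linarith [mul_nonneg hl (sqrt_nonneg (1 + ξ ^ 2))]) zero_le_one

theorem continuous_profile (l : ℝ) : Continuous (profile l) := by
  unfold profile; fun_prop

theorem continuous_weight_mul_profile_rpow (hσ : 0 ≤ σ) (l : ℝ) :
    Continuous fun ξ => (1 + 4 * ξ ^ 2) * √(1 + ξ ^ 2) * profile l ξ ^ σ := by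
  have := continuous_profile l
  fun_prop (disch := exact hσ)

theorem profile_rpow_le {c p : ℝ} (hl0 : 0 < l) (hl : 1 ≤ 2 * l ^ 2) (hl1 : l ≤ 1) (hc : 0 < c)
    (hcb : c ≤ cutoff l / 4) (hξ : ξ ∈ Ioo 0 (cutoff l)) :
    profile l ξ ^ p ≤ 1 + c ^ p * (cutoff l - ξ) ^ p := by
  have hgap : 0 < cutoff l - ξ := sub_pos.2 hξ.2
  rw [← mul_rpow hc.le hgap.le]
  refine rpow_le_one_add_rpow (mul_pos hc hgap) ?_ (profile_le_one hl0.le ξ)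
  calc c * (cutoff l - ξ) ≤ cutoff l * (cutoff l - ξ) / 4 := by nlinarith
    _ ≤ 1 - l * √(1 + ξ ^ 2) := cutoff_mul_sub_le hl0 hl hl1 hξ.1.le hξ.2.le
    _ ≤ profile l ξ := le_max_left _ _

section ProfileIntegral

variable {c : ℝ} (hσ : 0 < σ) (hl0 : 0 < l) (hl : 1 ≤ 2 * l ^ 2) (hl1 : l ≤ 1) (hc : 0 < c)
  (hcb : c ≤ cutoff l / 4)
include hσ hl0 hl hl1 hc hcb

theorem intervalIntegrable_profile_rpow :
    IntervalIntegrable (fun ξ => profile l ξ ^ (σ - 1)) volume 0 (cutoff l) := by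
  have hdom : IntervalIntegrable (fun ξ => 1 + c ^ (σ - 1) * (cutoff l - ξ) ^ (σ - 1))
      volume 0 (cutoff l) :=
    intervalIntegrable_const.add ((intervalIntegrable_rpow_sub_left _ (by linarith)).const_mul _)
  rw [intervalIntegrable_iff_integrableOn_Ioo_of_le (cutoff_nonneg hl0.le)] at hdom ⊢
  refine hdom.mono' ((continuous_profile l).measurable.pow_const _).aestronglyMeasurable ?_
  refine ae_restrict_of_forall_mem measurableSet_Ioo fun ξ hξ => ?_
  rw [norm_of_nonneg (rpow_nonneg (profile_nonneg l ξ) _)]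
  exact profile_rpow_le hl0 hl hl1 hc hcb hξ

theorem integral_profile_rpow_le :
    ∫ ξ in (0 : ℝ)..cutoff l, profile l ξ ^ (σ - 1) ≤ 1 + c ^ (σ - 1) / σ := by
  have hp : -1 < σ - 1 := by linarith
  calc ∫ ξ in (0 : ℝ)..cutoff l, profile l ξ ^ (σ - 1)
      ≤ ∫ ξ in (0 : ℝ)..cutoff l, (1 + c ^ (σ - 1) * (cutoff l - ξ) ^ (σ - 1)) :=
        intervalIntegral.integral_mono_on_of_le_Ioo (cutoff_nonneg hl0.le)
          (intervalIntegrable_profile_rpow hσ hl0 hl hl1 hc hcb)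
          (intervalIntegrable_const.add ((intervalIntegrable_rpow_sub_left _ hp).const_mul _))
          fun ξ hξ => profile_rpow_le hl0 hl hl1 hc hcb hξ
    _ = cutoff l + c ^ (σ - 1) * (cutoff l ^ σ / σ) := by
        rw [intervalIntegral.integral_add intervalIntegrable_const
          ((intervalIntegrable_rpow_sub_left _ hp).const_mul _),
          intervalIntegral.integral_const_mul, integral_rpow_sub_left _ hp, sub_add_cancel,
          intervalIntegral.integral_const, sub_zero, smul_eq_mul, mul_one]
    _ ≤ 1 + c ^ (σ - 1) * (1 / σ) := by
        gcongr
        · exact cutoff_le_one hl0 hl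
        · exact rpow_le_one (cutoff_nonneg hl0.le) (cutoff_le_one hl0 hl) hσ.le
    _ = 1 + c ^ (σ - 1) / σ := by rw [mul_one_div]

end ProfileIntegral

theorem intervalIntegrable_and_integral_profile_rpow_le {q : ℝ} (hσ : 0 < σ) (hσ1 : σ ≠ 1)
    (hq : q < 1) (hl : l ∈ Icc (1 / √2) q) :
    IntervalIntegrable (fun ξ => profile l ξ ^ (σ - 1)) volume 0 1 ∧
      ∫ ξ in (0 : ℝ)..1, profile l ξ ^ (σ - 1) ≤ 1 + (cutoff q / 4) ^ (σ - 1) / σ := by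
  have hl0 := pos_of_one_div_sqrt_two_le hl.1
  have hl2 := one_le_two_mul_sq_of_le hl.1
  have hl1 : l ≤ 1 := hl.2.trans hq.le
  have hc : 0 < cutoff q / 4 := by
    have := cutoff_pos (hl0.trans_le hl.2) hq
    positivity
  have hcb : cutoff q / 4 ≤ cutoff l / 4 := by gcongr; exact cutoff_le_cutoff_of_le hl0 hl.2
  have hint := intervalIntegrable_profile_rpow hσ hl0 hl2 hl1 hc hcb
  have hzero : ∀ ξ ∈ Icc (cutoff l) 1, profile l ξ ^ (σ - 1) = 0 := fun ξ hξ => by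
    rw [profile_eq_zero hl0 hl1 hξ.1, zero_rpow (sub_ne_zero.2 hσ1)]
  refine ⟨hint.trans (intervalIntegrable_of_forall_eq_zero (cutoff_le_one hl0 hl2) hzero), ?_⟩
  rw [integral_eq_of_forall_eq_zero hint (cutoff_le_one hl0 hl2) hzero]
  exact integral_profile_rpow_le hσ hl0 hl2 hl1 hc hcb

noncomputable def integratedByParts (σ l : ℝ) : ℝ :=
  ∫ ξ in (0 : ℝ)..1, (1 + 4 * ξ ^ 2) * √(1 + ξ ^ 2) * profile l ξ ^ σ

theorem hasDerivAt_mul_sqrt_pow_mul_profile_rpow (hl0 : 0 < l) (hl1 : l ≤ 1)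
    (hξ : ξ ∈ Ioo 0 (cutoff l)) :
    HasDerivAt (fun x => x * √(1 + x ^ 2) ^ 3 * profile l x ^ σ)
      ((1 + 4 * ξ ^ 2) * √(1 + ξ ^ 2) * profile l ξ ^ σ
        - σ * l * (ξ ^ 2 * (1 + ξ ^ 2) * profile l ξ ^ (σ - 1))) ξ := by
  set s := √(1 + ξ ^ 2) with hs_def
  have hs : 0 < s := sqrt_pos.2 (by positivity)
  have hs2 : s ^ 2 = 1 + ξ ^ 2 := sq_sqrt (by positivity)
  have hpos : 0 < 1 - l * s := one_sub_mul_sqrt_pos hl0 hl1 hξ.1.le hξ.2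
  have hsqrt : HasDerivAt (fun x => √(1 + x ^ 2)) (ξ / s) ξ := by
    convert ((hasDerivAt_pow 2 ξ).const_add 1).sqrt (by positivity) using 1
    field_simp
    ring
  have hprofile : HasDerivAt (fun x => profile l x ^ σ)
      (-(l * (ξ / s)) * σ * (1 - l * s) ^ (σ - 1)) ξ := by
    have hev : (fun x => profile l x ^ σ) =ᶠ[nhds ξ] fun x => (1 - l * √(1 + x ^ 2)) ^ σ := by
      have hcont : Continuous fun x : ℝ => 1 - l * √(1 + x ^ 2) := by fun_prop
      filter_upwards [(hcont.tendsto ξ).eventually (eventually_gt_nhds hpos)] with x hx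
      rw [profile, max_eq_left hx.le]
    exact (((hsqrt.const_mul l).const_sub 1).rpow_const (Or.inl hpos.ne')).congr_of_eventuallyEq
      hev
  refine (((hasDerivAt_id' ξ).fun_mul (hsqrt.fun_pow 3)).fun_mul hprofile).congr_deriv ?_
  rw [show profile l ξ = 1 - l * s from max_eq_left hpos.le, ← hs_def]
  generalize (1 - l * s) ^ σ = A
  generalize (1 - l * s) ^ (σ - 1) = B
  field_simp
  norm_num
  linear_combination (A * s ^ 2 - σ * l * ξ ^ 2 * B * s) * hs2

theorem mul_integral_profile_rpow_sub_one_eq (hσ : 0 < σ) (hl0 : 0 < l) (hl : 1 ≤ 2 * l ^ 2)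
    (hl1 : l < 1) :
    σ * l * ∫ ξ in (0 : ℝ)..cutoff l, ξ ^ 2 * (1 + ξ ^ 2) * profile l ξ ^ (σ - 1) =
      ∫ ξ in (0 : ℝ)..cutoff l, (1 + 4 * ξ ^ 2) * √(1 + ξ ^ 2) * profile l ξ ^ σ := by
  have hb0 := cutoff_nonneg hl0.le
  have hprofile := continuous_profile l
  have hint1 :=
    (continuous_weight_mul_profile_rpow hσ.le l).intervalIntegrable (μ := volume) 0 (cutoff l)
  have hint2 : IntervalIntegrable (fun ξ => ξ ^ 2 * (1 + ξ ^ 2) * profile l ξ ^ (σ - 1))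
      volume 0 (cutoff l) :=
    (intervalIntegrable_profile_rpow hσ hl0 hl hl1.le (by linarith [cutoff_pos hl0 hl1]) le_rfl)
      |>.continuousOn_mul (by fun_prop)
  have hftc := intervalIntegral.integral_eq_sub_of_hasDerivAt_of_le hb0
    (by fun_prop (disch := exact hσ.le) :
      Continuous fun x => x * √(1 + x ^ 2) ^ 3 * profile l x ^ σ).continuousOn
    (fun ξ hξ => hasDerivAt_mul_sqrt_pow_mul_profile_rpow hl0 hl1.le hξ)
    (hint1.sub (hint2.const_mul (σ * l)))
  -- The boundary terms vanish: at `0` through the factor `x`, at the cutoff through the profile.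
  rw [intervalIntegral.integral_sub hint1 (hint2.const_mul _), intervalIntegral.integral_const_mul,
    profile_eq_zero hl0 hl1.le le_rfl, zero_rpow hσ.ne'] at hftc
  simp only [mul_zero, zero_mul, sub_zero, ne_eq, OfNat.ofNat_ne_zero, not_false_eq_true,
    zero_pow] at hftc
  linarith

theorem eq_integratedByParts_at_alpha_one (hσ : 0 < σ) (hσ1 : σ ≠ 1) (hl0 : 0 < l)
    (hl : 1 ≤ 2 * l ^ 2) (hl1 : l < 1) :
    Gderiv2Fun σ 1 l = (σ + 1) * integratedByParts σ l / l := by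
  have hb0 := cutoff_nonneg hl0.le
  have hb1 := cutoff_le_one hl0 hl
  have hIoi : ∫ ξ in Ioi (0 : ℝ), ξ ^ 2 * (1 + ξ ^ 2) * profile l ξ ^ (σ - 1) =
      ∫ ξ in (0 : ℝ)..cutoff l, ξ ^ 2 * (1 + ξ ^ 2) * profile l ξ ^ (σ - 1) := by
    rw [intervalIntegral.integral_of_le hb0]
    refine setIntegral_eq_of_subset_of_ae_sdiff_eq_zero measurableSet_Ioi.nullMeasurableSet
      Ioc_subset_Ioi_self (ae_of_all _ fun ξ hξ => ?_)
    have hbξ : cutoff l ≤ ξ := le_of_not_ge fun h => hξ.2 ⟨hξ.1, h⟩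
    rw [profile_eq_zero hl0 hl1.le hbξ, zero_rpow (sub_ne_zero.2 hσ1), mul_zero]
  have hK : integratedByParts σ l =
      ∫ ξ in (0 : ℝ)..cutoff l, (1 + 4 * ξ ^ 2) * √(1 + ξ ^ 2) * profile l ξ ^ σ := by
    refine integral_eq_of_forall_eq_zero
      ((continuous_weight_mul_profile_rpow hσ.le l).intervalIntegrable _ _) hb1 fun ξ hξ => ?_
    rw [profile_eq_zero hl0 hl1.le hξ.1, zero_rpow hσ.ne', mul_zero]
  change σ * (σ + 1) * ∫ ξ in Ioi (0 : ℝ), ξ ^ 2 * (1 + ξ ^ 2) * profile l ξ ^ (σ - 1) = _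
  rw [hIoi, hK, ← mul_integral_profile_rpow_sub_one_eq hσ hl0 hl hl1]
  field_simp

theorem abs_integratedByParts_le (hσ : 0 ≤ σ) (hl : 0 ≤ l) : |integratedByParts σ l| ≤ 10 := by
  have hbound : ∀ ξ ∈ uIoc (0 : ℝ) 1,
      ‖(1 + 4 * ξ ^ 2) * √(1 + ξ ^ 2) * profile l ξ ^ σ‖ ≤ 10 := by
    intro ξ hξ
    rw [uIoc_of_le zero_le_one] at hξ
    have hs : √(1 + ξ ^ 2) ≤ 2 := by
      rw [sqrt_le_left zero_le_two]
      nlinarith [hξ.1, hξ.2]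
    have hp : profile l ξ ^ σ ≤ 1 := rpow_le_one (profile_nonneg l ξ) (profile_le_one hl ξ) hσ
    rw [norm_of_nonneg (mul_nonneg (by positivity) (rpow_nonneg (profile_nonneg l ξ) σ))]
    calc (1 + 4 * ξ ^ 2) * √(1 + ξ ^ 2) * profile l ξ ^ σ ≤ 5 * 2 * 1 := by
          gcongr
          · exact rpow_nonneg (profile_nonneg l ξ) σ
          · nlinarith [hξ.1, hξ.2]
      _ = 10 := by norm_num
  simpa [integratedByParts] using intervalIntegral.norm_integral_le_of_norm_le_const hbound

theorem abs_weight_mul_profile_rpow_sub_le (hσ : 0 < σ) (l l' : ℝ) (hξ : ξ ∈ Icc (0 : ℝ) 1) :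
    |(1 + 4 * ξ ^ 2) * √(1 + ξ ^ 2) * profile l ξ ^ σ
        - (1 + 4 * ξ ^ 2) * √(1 + ξ ^ 2) * profile l' ξ ^ σ| ≤
      10 * (σ + 1) * |l - l'| * (profile l ξ ^ (σ - 1) + profile l' ξ ^ (σ - 1)) := by
  set s := √(1 + ξ ^ 2)
  have hs0 : 0 ≤ s := sqrt_nonneg _
  have hs2 : s ^ 2 = 1 + ξ ^ 2 := sq_sqrt (by positivity)
  have hweight : (1 + 4 * ξ ^ 2) * s * s ≤ 10 := by
    have hξ2 : ξ ^ 2 ≤ 1 := by nlinarith [hξ.1, hξ.2]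
    rw [mul_assoc, ← sq, hs2]
    nlinarith [mul_le_mul hξ2 hξ2 (sq_nonneg ξ) zero_le_one]
  have hdiff := abs_max_rpow_sub_max_rpow_le hσ (1 - l * s) (1 - l' * s)
  rw [show 1 - l * s - (1 - l' * s) = -(l - l') * s by ring, abs_mul, abs_neg,
    abs_of_nonneg hs0] at hdiff
  have hsum : 0 ≤ profile l ξ ^ (σ - 1) + profile l' ξ ^ (σ - 1) :=
    add_nonneg (rpow_nonneg (profile_nonneg l ξ) _) (rpow_nonneg (profile_nonneg l' ξ) _)
  rw [← mul_sub, abs_mul, abs_of_nonneg (by positivity)]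
  calc (1 + 4 * ξ ^ 2) * s * |profile l ξ ^ σ - profile l' ξ ^ σ|
      ≤ (1 + 4 * ξ ^ 2) * s * ((σ + 1) * (|l - l'| * s) *
          (profile l ξ ^ (σ - 1) + profile l' ξ ^ (σ - 1))) := by gcongr; exact hdiff
    _ = (1 + 4 * ξ ^ 2) * s * s * ((σ + 1) * |l - l'| *
          (profile l ξ ^ (σ - 1) + profile l' ξ ^ (σ - 1))) := by ring
    _ ≤ 10 * ((σ + 1) * |l - l'| * (profile l ξ ^ (σ - 1) + profile l' ξ ^ (σ - 1))) := by
        gcongr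
    _ = _ := by ring

theorem abs_integratedByParts_sub_le {q l' : ℝ} (hσ : 0 < σ) (hσ1 : σ ≠ 1) (hq : q < 1)
    (hl : l ∈ Icc (1 / √2) q) (hl' : l' ∈ Icc (1 / √2) q) :
    |integratedByParts σ l - integratedByParts σ l'| ≤
      20 * (σ + 1) * (1 + (cutoff q / 4) ^ (σ - 1) / σ) * |l - l'| := by
  obtain ⟨hint, hI⟩ := intervalIntegrable_and_integral_profile_rpow_le hσ hσ1 hq hl
  obtain ⟨hint', hI'⟩ := intervalIntegrable_and_integral_profile_rpow_le hσ hσ1 hq hl'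
  rw [integratedByParts, integratedByParts, ← intervalIntegral.integral_sub
    ((continuous_weight_mul_profile_rpow hσ.le l).intervalIntegrable _ _)
    ((continuous_weight_mul_profile_rpow hσ.le l').intervalIntegrable _ _), ← Real.norm_eq_abs]
  calc _ ≤ ∫ ξ in (0 : ℝ)..1,
          10 * (σ + 1) * |l - l'| * (profile l ξ ^ (σ - 1) + profile l' ξ ^ (σ - 1)) :=
        intervalIntegral.norm_integral_le_of_norm_le zero_le_one
          (ae_of_all _ fun ξ hξ =>
            abs_weight_mul_profile_rpow_sub_le hσ l l' (Ioc_subset_Icc_self hξ))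
          ((hint.add hint').const_mul _)
    _ = 10 * (σ + 1) * |l - l'| * ((∫ ξ in (0 : ℝ)..1, profile l ξ ^ (σ - 1)) +
          ∫ ξ in (0 : ℝ)..1, profile l' ξ ^ (σ - 1)) := by
        rw [intervalIntegral.integral_const_mul, intervalIntegral.integral_add hint hint']
    _ ≤ 10 * (σ + 1) * |l - l'| * ((1 + (cutoff q / 4) ^ (σ - 1) / σ) +
          (1 + (cutoff q / 4) ^ (σ - 1) / σ)) := by gcongr
    _ = _ := by ring

-- For `σ = 1` the integrand is `ξ²(1+ξ²)`, which is not integrable, so the Bochner integral is `0`.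
theorem sigma_one_eq_zero (α ε : ℝ) : Gderiv2Fun 1 α ε = 0 := by
  have hni : ¬ IntegrableOn (fun ξ : ℝ => ξ ^ 2 * (1 + ξ ^ 2)) (Ioi 0) := fun h => by
    have h1 : IntegrableOn (fun _ : ℝ => (1 : ℝ)) (Ioi 1) :=
      (h.mono_set (Ioi_subset_Ioi zero_le_one)).mono' aestronglyMeasurable_const
        (ae_restrict_of_forall_mem measurableSet_Ioi fun x (hx : 1 < x) => by
          rw [norm_one]
          nlinarith)
    simp [integrableOn_const_iff] at h1
  simp only [Gderiv2Fun, sub_self, rpow_zero, mul_one]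
  rw [integral_undef hni, mul_zero]

theorem exists_abs_sub_le_at_alpha_one {q : ℝ} (hσ : 0 < σ) (hq : q ∈ Ico (1 / √2) 1) :
    ∃ C > 0, ∀ l ∈ Icc (1 / √2) q, ∀ l' ∈ Icc (1 / √2) q,
      |Gderiv2Fun σ 1 l - Gderiv2Fun σ 1 l'| ≤ C * |l - l'| := by
  rcases eq_or_ne σ 1 with rfl | hσ1
  · exact ⟨1, one_pos, fun l _ l' _ => by simp [sigma_one_eq_zero]⟩
  have hM : 0 ≤ (cutoff q / 4) ^ (σ - 1) :=
    rpow_nonneg (div_nonneg (cutoff_nonneg (pos_of_one_div_sqrt_two_le hq.1).le) zero_le_four) _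
  set L := 20 * (σ + 1) * (1 + (cutoff q / 4) ^ (σ - 1) / σ)
  refine ⟨2 * (σ + 1) * (L + 10), by positivity, fun l hl l' hl' => ?_⟩
  have hl0 := pos_of_one_div_sqrt_two_le hl.1
  have hl0' := pos_of_one_div_sqrt_two_le hl'.1
  have hl1 : l < 1 := hl.2.trans_lt hq.2
  have hl1' : l' < 1 := hl'.2.trans_lt hq.2
  rw [eq_integratedByParts_at_alpha_one hσ hσ1 hl0 (one_le_two_mul_sq_of_le hl.1) hl1,
    eq_integratedByParts_at_alpha_one hσ hσ1 hl0' (one_le_two_mul_sq_of_le hl'.1) hl1',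
    mul_div_assoc, mul_div_assoc, ← mul_sub, abs_mul, abs_of_pos (by linarith : 0 < σ + 1)]
  calc (σ + 1) * |integratedByParts σ l / l - integratedByParts σ l' / l'|
      ≤ (σ + 1) * (2 * (|integratedByParts σ l - integratedByParts σ l'| +
          |integratedByParts σ l'| * |l - l'|)) := by
        gcongr
        exact abs_div_sub_div_le hl0 hl0' hl1'.le (one_le_two_mul_mul hl.1 hl'.1)
    _ ≤ (σ + 1) * (2 * (L * |l - l'| + 10 * |l - l'|)) := by
        gcongr
        · exact abs_integratedByParts_sub_le hσ hσ1 hq.2 hl hl'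
        · exact abs_integratedByParts_le hσ.le hl0'.le
    _ = _ := by ring

theorem eq_rpow_mul (σ : ℝ) {α : ℝ} (hα : 0 < α) (ε : ℝ) :
    Gderiv2Fun σ α ε = α ^ (σ - 1) * Gderiv2Fun σ 1 (ε / α) := by
  have h : ∀ ξ : ℝ, max (α - ε * √(1 + ξ ^ 2)) 0 ^ (σ - 1) =
      α ^ (σ - 1) * max (1 - ε / α * √(1 + ξ ^ 2)) 0 ^ (σ - 1) := fun ξ => by
    rw [← mul_rpow hα.le (le_max_right _ _), mul_max_of_nonneg _ _ hα.le, mul_zero]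
    congr 2
    field_simp
  simp only [Gderiv2Fun, h, mul_left_comm _ (α ^ (σ - 1)), integral_const_mul]

theorem div_mem_Icc {q α ε : ℝ} (hα : 0 < α) (hε : ε ∈ Icc (α / √2) (q * α)) :
    ε / α ∈ Icc (1 / √2) q :=
  ⟨(le_div_iff₀ hα).2 (by rw [one_div_mul_eq_div]; exact hε.1), (div_le_iff₀ hα).2 hε.2⟩

end Gderiv2Fun

/-- For every `q ∈ [1/√2, 1)` there is `C_q > 0` (independent of `α`) with
`|G''(ε) − G''(ε̃)| ≤ C_q α^{−(2−σ)} |ε − ε̃|` on `[α/√2, qα]`. -/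
theorem stmt_13 (σ : ℝ) (hσ : σ ∈ Set.Ioo (0:ℝ) (3/2)) :
    ∀ q ∈ Set.Ico (1 / Real.sqrt 2) (1:ℝ),
      ∃ C : ℝ, 0 < C ∧ ∀ α : ℝ, 0 < α →
        ∀ ε ∈ Set.Icc (α / Real.sqrt 2) (q * α),
        ∀ ε' ∈ Set.Icc (α / Real.sqrt 2) (q * α),
          |Gderiv2Fun σ α ε - Gderiv2Fun σ α ε'| ≤ C * α ^ (-(2 - σ)) * |ε - ε'| := by
  intro q hq
  obtain ⟨C, hC, hlip⟩ := Gderiv2Fun.exists_abs_sub_le_at_alpha_one hσ.1 hq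
  refine ⟨C, hC, fun α hα ε hε ε' hε' => ?_⟩
  have hαpow : α ^ (σ - 1) = α ^ (-(2 - σ)) * α := by
    rw [← rpow_add_one hα.ne']
    ring_nf
  rw [Gderiv2Fun.eq_rpow_mul σ hα, Gderiv2Fun.eq_rpow_mul σ hα, ← mul_sub, abs_mul,
    abs_of_pos (rpow_pos_of_pos hα _)]
  calc α ^ (σ - 1) * |Gderiv2Fun σ 1 (ε / α) - Gderiv2Fun σ 1 (ε' / α)|
      ≤ α ^ (σ - 1) * (C * |ε / α - ε' / α|) := by
        gcongr
        exact hlip _ (Gderiv2Fun.div_mem_Icc hα hε) _ (Gderiv2Fun.div_mem_Icc hα hε')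
    _ = C * α ^ (-(2 - σ)) * |ε - ε'| := by
        rw [← sub_div, abs_div, abs_of_pos hα, hαpow]
        field_simp
end

section
/- Fix r > 0, σ ∈ (0, 3/2), α > 0 and a > 0. Let Ξ_r be the set of nonnegative functions χ ∈ L^{1+1/σ}(ℝ × [0,∞)) vanishing on {(w,β) : √(1+w²+β/r²) ≥ 2}. Define H(χ) = ∫∫ ((σ/(σ+1)) χ^{1+1/σ} − α χ) dw dβ and the constraint F(χ) = ∫∫ √(1+w²+β/r²) χ dw dβ − (r²/π) a. Then the infimum of H over {χ ∈ Ξ_r : F(χ) = 0} is attained, and the minimizer subject to the constraint is unique. -/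
/-!
Lagrange multipliers. For a multiplier `κ`, on the constraint set `H` differs by the constant
`κ · r²a/π` from the integral of the Lagrangian `σ/(σ+1) χ^{1+1/σ} - (α - κ E) χ`, where
`E = √(1+w²+β/r²)`. Its integrand is minimised pointwise, and uniquely by strict convexity, at
`χ_κ = (α - κ E)₊^σ` (cut off where `E ≥ 2`). The constraint value `κ ↦ ∫ E χ_κ` is continuous by
dominated convergence, vanishes at `κ = |α|` because `E ≥ 1`, and exceeds any bound as
`κ → -∞`; so some `χ_κ` satisfies the constraint and minimises `H`. Any other constrained
minimiser has the same Lagrangian integral, so its integrand agrees with that of `χ_κ` a.e.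
-/

open MeasureTheory

/-- Lebesgue measure on `ℝ × [0,∞)` (as a measure on `ℝ × ℝ`). -/
noncomputable def muHalf : Measure (ℝ × ℝ) :=
  volume.restrict {p : ℝ × ℝ | 0 ≤ p.2}

/-- The set `Ξ_r`: nonnegative functions in `L^{1+1/σ}(ℝ × [0,∞))` vanishing
where `√(1+w²+β/r²) ≥ 2`. -/
def XiSet (r σ : ℝ) : Set (ℝ × ℝ → ℝ) :=
  {χ | MemLp χ (ENNReal.ofReal (1 + 1 / σ)) muHalf ∧ (∀ p, 0 ≤ χ p) ∧
    ∀ p : ℝ × ℝ, 2 ≤ Real.sqrt (1 + p.1 ^ 2 + p.2 / r ^ 2) → χ p = 0}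

/-- `H(χ) = ∫∫ ((σ/(σ+1)) χ^{1+1/σ} − α χ)`. -/
noncomputable def Hfun (σ α : ℝ) (χ : ℝ × ℝ → ℝ) : ℝ :=
  ∫ p, (σ / (σ + 1)) * χ p ^ (1 + 1 / σ) - α * χ p ∂muHalf

/-- `F(χ) = ∫∫ √(1+w²+β/r²) χ − (r²/π) a`. -/
noncomputable def Ffun (r a : ℝ) (χ : ℝ × ℝ → ℝ) : ℝ :=
  (∫ p, Real.sqrt (1 + p.1 ^ 2 + p.2 / r ^ 2) * χ p ∂muHalf) - r ^ 2 / Real.pi * a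

open Set Filter

namespace ConstrainedMinimizer

noncomputable def potential (σ b t : ℝ) : ℝ := σ / (σ + 1) * t ^ (1 + 1 / σ) - b * t

section Potential

variable {σ : ℝ}

/-- Young's inequality with the conjugate exponents `1 + 1/σ` and `σ + 1`. -/
lemma potential_max_rpow_le (hσ : 0 < σ) (b : ℝ) {t : ℝ} (ht : 0 ≤ t) :
    potential σ b (max b 0 ^ σ) ≤ potential σ b t := by
  have ht' : 0 ≤ t ^ (1 + 1 / σ) := Real.rpow_nonneg ht _
  rcases le_or_gt b 0 with hb | hb
  · rw [potential, potential, max_eq_right hb, Real.zero_rpow hσ.ne',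
      Real.zero_rpow (by positivity)]
    nlinarith [mul_nonneg (by positivity : 0 ≤ σ / (σ + 1)) ht', mul_nonneg (neg_nonneg.2 hb) ht]
  · have hconj : (1 + 1 / σ).HolderConjugate (σ + 1) := by
      refine Real.holderConjugate_iff.2 ⟨by linarith [one_div_pos.2 hσ], ?_⟩
      field_simp
    have hpow : (b ^ σ) ^ (1 + 1 / σ) = b ^ (σ + 1) := by
      rw [← Real.rpow_mul hb.le]; congr 1; field_simp
    have hmul : b * b ^ σ = b ^ (σ + 1) := by rw [Real.rpow_add hb, Real.rpow_one]; ring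
    have hyoung := Real.young_inequality_of_nonneg ht hb.le hconj
    rw [potential, potential, max_eq_left hb.le, hpow, hmul]
    have hcoef : t ^ (1 + 1 / σ) / (1 + 1 / σ) = σ / (σ + 1) * t ^ (1 + 1 / σ) := by
      field_simp
    have hsplit : σ / (σ + 1) * b ^ (σ + 1) - b ^ (σ + 1) = -(b ^ (σ + 1) / (σ + 1)) := by
      field_simp; ring
    linarith

lemma strictConvexOn_potential (hσ : 0 < σ) (b : ℝ) :
    StrictConvexOn ℝ (Ici 0) (potential σ b) := by
  refine ⟨convex_Ici 0, fun x hx y hy hxy u v hu hv huv => ?_⟩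
  have hrpow := (strictConvexOn_rpow (by linarith [one_div_pos.2 hσ] : (1 : ℝ) < 1 + 1 / σ)).2
    hx hy hxy hu hv huv
  simp only [potential, smul_eq_mul] at hrpow ⊢
  have hc : 0 < σ / (σ + 1) := by positivity
  linear_combination (mul_lt_mul_of_pos_left hrpow hc)

lemma eq_max_rpow_of_potential_eq (hσ : 0 < σ) (b : ℝ) {t : ℝ} (ht : 0 ≤ t)
    (h : potential σ b t = potential σ b (max b 0 ^ σ)) : t = max b 0 ^ σ := by
  have hmin : IsMinOn (potential σ b) (Ici 0) (max b 0 ^ σ) :=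
    fun s hs => potential_max_rpow_le hσ b hs
  refine (strictConvexOn_potential hσ b).eq_of_isMinOn (fun s hs => ?_) hmin ht
    (Real.rpow_nonneg (le_max_right b 0) σ)
  rw [mem_ofPred_eq, h]
  exact hmin hs

end Potential


noncomputable def energy (r : ℝ) (p : ℝ × ℝ) : ℝ := √(1 + p.1 ^ 2 + p.2 / r ^ 2)

def lowEnergy (r : ℝ) : Set (ℝ × ℝ) := {p | energy r p < 2}

section Geometry

variable {r : ℝ}

lemma continuous_energy (r : ℝ) : Continuous (energy r) :=
  Real.continuous_sqrt.comp (by fun_prop)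

lemma measurableSet_lowEnergy (r : ℝ) : MeasurableSet (lowEnergy r) :=
  (isOpen_Iio.preimage (continuous_energy r)).measurableSet

lemma energy_nonneg (r : ℝ) (p : ℝ × ℝ) : 0 ≤ energy r p := Real.sqrt_nonneg _

lemma one_le_energy {p : ℝ × ℝ} (hp : 0 ≤ p.2) : 1 ≤ energy r p :=
  Real.one_le_sqrt.2 (by nlinarith [sq_nonneg p.1, div_nonneg hp (sq_nonneg r)])

lemma ae_muHalf_snd_nonneg : ∀ᵐ p ∂muHalf, 0 ≤ p.2 :=
  ae_restrict_mem (measurableSet_le measurable_const measurable_snd)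

lemma lowEnergy_inter_subset_Icc_prod_Icc (hr : r ≠ 0) :
    lowEnergy r ∩ {p | 0 ≤ p.2} ⊆ Icc (-2) 2 ×ˢ Icc 0 (3 * r ^ 2) := by
  rintro p ⟨hlow, hp⟩
  have hr2 : 0 < r ^ 2 := by positivity
  have hlt : 1 + p.1 ^ 2 + p.2 / r ^ 2 < 4 := by
    have := (Real.sqrt_lt' two_pos).1 hlow
    norm_num at this
    linarith
  have hdiv : 0 ≤ p.2 / r ^ 2 := div_nonneg hp hr2.le
  have hsnd : p.2 < 3 * r ^ 2 := (div_lt_iff₀ hr2).1 (by nlinarith [sq_nonneg p.1])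
  exact ⟨⟨by nlinarith, by nlinarith⟩, hp, hsnd.le⟩

lemma muHalf_lowEnergy_lt_top (hr : r ≠ 0) : muHalf (lowEnergy r) < ⊤ := by
  rw [muHalf, Measure.restrict_apply (measurableSet_lowEnergy r)]
  exact (measure_mono (lowEnergy_inter_subset_Icc_prod_Icc hr)).trans_lt
    (isCompact_Icc.prod isCompact_Icc).measure_lt_top

lemma Icc_prod_Icc_subset_lowEnergy (hr : r ≠ 0) :
    Icc 0 1 ×ˢ Icc 0 (r ^ 2) ⊆ lowEnergy r := by
  rintro p ⟨⟨h1, h2⟩, h3, h4⟩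
  have hdiv : p.2 / r ^ 2 ≤ 1 := (div_le_one (by positivity)).2 h4
  exact (Real.sqrt_lt' two_pos).2 (by nlinarith)

lemma muHalf_Icc_prod_Icc (r : ℝ) : muHalf (Icc 0 1 ×ˢ Icc 0 (r ^ 2)) = ENNReal.ofReal (r ^ 2) := by
  have hmeas : MeasurableSet (Icc (0 : ℝ) 1 ×ˢ Icc 0 (r ^ 2)) :=
    measurableSet_Icc.prod measurableSet_Icc
  rw [muHalf, Measure.restrict_apply hmeas,
    inter_eq_left.2 fun p hp => hp.2.1, Measure.volume_eq_prod, Measure.prod_prod,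
    Real.volume_Icc, Real.volume_Icc]
  simp

end Geometry

section Admissible

variable {r σ : ℝ} {χ : ℝ × ℝ → ℝ}

lemma indicator_lowEnergy_of_mem_XiSet (hχ : χ ∈ XiSet r σ) :
    (lowEnergy r).indicator χ = χ := by
  refine indicator_eq_self.2 fun p hp => ?_
  by_contra hlow
  exact hp (hχ.2.2 p (not_lt.1 hlow))

lemma integrable_of_mem_XiSet (hr : r ≠ 0) (hσ : 0 < σ) (hχ : χ ∈ XiSet r σ) :
    Integrable χ muHalf := by
  have := isFiniteMeasure_restrict.2 (muHalf_lowEnergy_lt_top hr).ne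
  rw [← indicator_lowEnergy_of_mem_XiSet hχ,
    integrable_indicator_iff (measurableSet_lowEnergy r), IntegrableOn,
    ← memLp_one_iff_integrable]
  refine (hχ.1.restrict _).mono_exponent ?_
  rw [← ENNReal.ofReal_one]
  exact ENNReal.ofReal_le_ofReal (by linarith [one_div_pos.2 hσ])

lemma integrable_rpow_of_mem_XiSet (hσ : 0 < σ) (hχ : χ ∈ XiSet r σ) :
    Integrable (fun p => χ p ^ (1 + 1 / σ)) muHalf := by
  have hq : (0 : ℝ) < 1 + 1 / σ := by positivity
  refine (hχ.1.integrable_norm_rpow (ENNReal.ofReal_pos.2 hq).ne' ENNReal.ofReal_ne_top).congr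
    (Eventually.of_forall fun p => ?_)
  simp only [ENNReal.toReal_ofReal hq.le, Real.norm_of_nonneg (hχ.2.1 p)]

lemma integrable_energy_mul_of_mem_XiSet (hr : r ≠ 0) (hσ : 0 < σ) (hχ : χ ∈ XiSet r σ) :
    Integrable (fun p => energy r p * χ p) muHalf := by
  refine ((integrable_of_mem_XiSet hr hσ hχ).const_mul 2).mono'
    ((continuous_energy r).aestronglyMeasurable.mul hχ.1.1) (Eventually.of_forall fun p => ?_)
  rw [Real.norm_of_nonneg (mul_nonneg (energy_nonneg r p) (hχ.2.1 p))]
  by_cases hlow : energy r p < 2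
  · exact mul_le_mul_of_nonneg_right hlow.le (hχ.2.1 p)
  · simp [hχ.2.2 p (not_lt.1 hlow)]

end Admissible

/-- The pointwise minimiser of the Lagrangian with multiplier `κ`, cut off outside the
admissible region. -/
noncomputable def profile (r σ α κ : ℝ) : ℝ × ℝ → ℝ :=
  (lowEnergy r).indicator fun p => max (α - κ * energy r p) 0 ^ σ

section Profile

variable {r σ α : ℝ}

lemma profile_nonneg (r σ α κ : ℝ) (p : ℝ × ℝ) : 0 ≤ profile r σ α κ p :=
  indicator_nonneg (fun _ _ => Real.rpow_nonneg (le_max_right _ _) _) p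

lemma continuous_rpow_max_sub_mul_energy (hσ : 0 ≤ σ) :
    Continuous fun x : ℝ × ℝ × ℝ => max (α - x.1 * energy r x.2) 0 ^ σ :=
  ((continuous_const.sub (continuous_fst.mul ((continuous_energy r).comp continuous_snd))).max
    continuous_const).rpow_const fun _ => Or.inr hσ

lemma profile_mem_XiSet (hr : r ≠ 0) (hσ : 0 < σ) (κ : ℝ) : profile r σ α κ ∈ XiSet r σ := by
  refine ⟨?_, profile_nonneg r σ α κ, fun p hp =>
    indicator_of_notMem (show p ∉ lowEnergy r from not_lt.2 hp) _⟩
  have := isFiniteMeasure_restrict.2 (muHalf_lowEnergy_lt_top hr).ne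
  rw [profile, memLp_indicator_iff_restrict (measurableSet_lowEnergy r)]
  refine MemLp.of_bound ?_ ((|α| + 2 * |κ|) ^ σ)
    (ae_restrict_of_forall_mem (measurableSet_lowEnergy r) fun p hlow => ?_)
  · exact ((continuous_rpow_max_sub_mul_energy hσ.le).comp
      (continuous_const.prodMk continuous_id)).aestronglyMeasurable
  · have hbase : max (α - κ * energy r p) 0 ≤ |α| + 2 * |κ| := by
      refine max_le ?_ (by positivity)
      have := mul_le_mul_of_nonneg_right (neg_le_abs κ) (energy_nonneg r p)
      have := mul_le_mul_of_nonneg_left (le_of_lt hlow) (abs_nonneg κ)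
      linarith [le_abs_self α]
    rw [Real.norm_of_nonneg (Real.rpow_nonneg (le_max_right _ _) _)]
    exact Real.rpow_le_rpow (le_max_right _ _) hbase hσ.le

lemma antitone_profile_apply (hσ : 0 ≤ σ) (p : ℝ × ℝ) : Antitone fun κ => profile r σ α κ p := by
  intro κ κ' hκ
  by_cases hlow : p ∈ lowEnergy r
  · simp only [profile, indicator_of_mem hlow]
    refine Real.rpow_le_rpow (le_max_right _ _) (max_le_max ?_ le_rfl) hσ
    nlinarith [energy_nonneg r p]
  · simp [profile, indicator_of_notMem hlow]

lemma continuous_profile_apply (hσ : 0 ≤ σ) (p : ℝ × ℝ) :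
    Continuous fun κ => profile r σ α κ p := by
  by_cases hlow : p ∈ lowEnergy r
  · simp only [profile, indicator_of_mem hlow]
    exact (continuous_rpow_max_sub_mul_energy hσ).comp (continuous_id.prodMk continuous_const)
  · simp [profile, indicator_of_notMem hlow, continuous_const]

end Profile

noncomputable def energyMoment (r σ α κ : ℝ) : ℝ :=
  ∫ p, energy r p * profile r σ α κ p ∂muHalf

section EnergyMoment

variable {r σ α : ℝ}

lemma continuousOn_energyMoment (hr : r ≠ 0) (hσ : 0 < σ) (lo hi : ℝ) :
    ContinuousOn (energyMoment r σ α) (Icc lo hi) := by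
  refine continuousOn_of_dominated (bound := fun p => energy r p * profile r σ α lo p)
    (fun κ _ => (integrable_energy_mul_of_mem_XiSet hr hσ (profile_mem_XiSet hr hσ κ)).1)
    (fun κ hκ => Eventually.of_forall fun p => ?_)
    (integrable_energy_mul_of_mem_XiSet hr hσ (profile_mem_XiSet hr hσ lo))
    (Eventually.of_forall fun p =>
      (continuous_const.mul (continuous_profile_apply hσ.le p)).continuousOn)
  rw [Real.norm_of_nonneg (mul_nonneg (energy_nonneg r p) (profile_nonneg r σ α κ p))]
  exact mul_le_mul_of_nonneg_left (antitone_profile_apply hσ.le p hκ.1) (energy_nonneg r p)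

lemma energyMoment_abs_eq_zero (hσ : 0 < σ) : energyMoment r σ α |α| = 0 := by
  refine integral_eq_zero_of_ae ?_
  filter_upwards [ae_muHalf_snd_nonneg] with p hp
  have hneg : α - |α| * energy r p ≤ 0 := by
    nlinarith [le_abs_self α, abs_nonneg α, one_le_energy (r := r) hp]
  simp [profile, max_eq_right hneg, Real.zero_rpow hσ.ne']

lemma le_energyMoment_neg (hr : r ≠ 0) (hσ : 0 < σ) {c : ℝ} (hc : 0 ≤ c) :
    c ^ σ * r ^ 2 ≤ energyMoment r σ α (-(|α| + c)) := by
  set T : Set (ℝ × ℝ) := Icc 0 1 ×ˢ Icc 0 (r ^ 2)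
  have hT : MeasurableSet T := measurableSet_Icc.prod measurableSet_Icc
  have hint := integrable_energy_mul_of_mem_XiSet hr hσ (profile_mem_XiSet (α := α) hr hσ
    (-(|α| + c)))
  have hbound : ∀ p ∈ T, c ^ σ ≤ energy r p * profile r σ α (-(|α| + c)) p := by
    intro p hp
    have hE := one_le_energy (r := r) hp.2.1
    have hbase : c ≤ max (α - -(|α| + c) * energy r p) 0 :=
      le_max_of_le_left (by
        nlinarith [neg_abs_le α, mul_nonneg (add_nonneg (abs_nonneg α) hc) (sub_nonneg.2 hE)])
    rw [profile, indicator_of_mem (Icc_prod_Icc_subset_lowEnergy hr hp)]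
    calc c ^ σ = 1 * c ^ σ := (one_mul _).symm
      _ ≤ _ := mul_le_mul hE (Real.rpow_le_rpow hc hbase hσ.le)
          (Real.rpow_nonneg hc σ) (energy_nonneg r p)
  calc c ^ σ * r ^ 2 = c ^ σ * (muHalf T).toReal := by
        rw [muHalf_Icc_prod_Icc, ENNReal.toReal_ofReal (sq_nonneg r)]
    _ ≤ ∫ p in T, energy r p * profile r σ α (-(|α| + c)) p ∂muHalf :=
        setIntegral_ge_of_const_le_real hT
          (by rw [muHalf_Icc_prod_Icc]; exact ENNReal.ofReal_ne_top) hbound hint.integrableOn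
    _ ≤ energyMoment r σ α (-(|α| + c)) :=
        setIntegral_le_integral hint (Eventually.of_forall fun p =>
          mul_nonneg (energy_nonneg r p) (profile_nonneg r σ α _ p))

lemma exists_energyMoment_eq (hr : r ≠ 0) (hσ : 0 < σ) {m : ℝ} (hm : 0 ≤ m) :
    ∃ κ, energyMoment r σ α κ = m := by
  set c := (m / r ^ 2) ^ σ⁻¹
  have hc : 0 ≤ c := by positivity
  have hle : -(|α| + c) ≤ |α| := by linarith [abs_nonneg α]
  have hcσ : c ^ σ * r ^ 2 = m := by
    rw [Real.rpow_inv_rpow (by positivity) hσ.ne', div_mul_cancel₀ _ (pow_ne_zero 2 hr)]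
  obtain ⟨κ, -, hκ⟩ := intermediate_value_Icc' hle (continuousOn_energyMoment hr hσ _ _)
    ⟨(energyMoment_abs_eq_zero hσ).symm ▸ hm, hcσ ▸ le_energyMoment_neg hr hσ hc⟩
  exact ⟨κ, hκ⟩

end EnergyMoment

noncomputable def lagrangian (r σ α κ : ℝ) (χ : ℝ × ℝ → ℝ) (p : ℝ × ℝ) : ℝ :=
  potential σ (α - κ * energy r p) (χ p)

section Lagrangian

variable {r σ α a κ : ℝ} {χ : ℝ × ℝ → ℝ}

lemma lagrangian_eq (r σ α κ : ℝ) (χ : ℝ × ℝ → ℝ) :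
    lagrangian r σ α κ χ =
      fun p => (σ / (σ + 1) * χ p ^ (1 + 1 / σ) - α * χ p) + κ * (energy r p * χ p) := by
  funext p
  simp only [lagrangian, potential]
  ring

lemma integrable_lagrangian (hr : r ≠ 0) (hσ : 0 < σ) (κ : ℝ) (hχ : χ ∈ XiSet r σ) :
    Integrable (lagrangian r σ α κ χ) muHalf := by
  rw [lagrangian_eq]
  exact (((integrable_rpow_of_mem_XiSet hσ hχ).const_mul _).sub
    ((integrable_of_mem_XiSet hr hσ hχ).const_mul α)).add
    ((integrable_energy_mul_of_mem_XiSet hr hσ hχ).const_mul κ)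

lemma Hfun_eq_integral_lagrangian_sub (hr : r ≠ 0) (hσ : 0 < σ) (κ : ℝ)
    (hχ : χ ∈ XiSet r σ) (hF : Ffun r a χ = 0) :
    Hfun σ α χ = ∫ p, lagrangian r σ α κ χ p ∂muHalf - κ * (r ^ 2 / Real.pi * a) := by
  have hmoment : ∫ p, energy r p * χ p ∂muHalf = r ^ 2 / Real.pi * a := sub_eq_zero.1 hF
  have hint : Integrable (fun p => σ / (σ + 1) * χ p ^ (1 + 1 / σ) - α * χ p) muHalf :=
    ((integrable_rpow_of_mem_XiSet hσ hχ).const_mul _).sub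
      ((integrable_of_mem_XiSet hr hσ hχ).const_mul α)
  rw [Hfun, lagrangian_eq, integral_add hint
      ((integrable_energy_mul_of_mem_XiSet hr hσ hχ).const_mul κ), integral_const_mul, hmoment]
  ring

lemma lagrangian_profile_le (hσ : 0 < σ) (κ : ℝ) (hχ : χ ∈ XiSet r σ) :
    lagrangian r σ α κ (profile r σ α κ) ≤ lagrangian r σ α κ χ := by
  intro p
  by_cases hlow : p ∈ lowEnergy r
  · simp only [lagrangian, profile, indicator_of_mem hlow]
    exact potential_max_rpow_le hσ _ (hχ.2.1 p)
  · simp only [lagrangian, profile, indicator_of_notMem hlow, hχ.2.2 p (not_lt.1 hlow)]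
    rfl

lemma eq_profile_of_lagrangian_eq (hσ : 0 < σ) (κ : ℝ) (hχ : χ ∈ XiSet r σ) {p : ℝ × ℝ}
    (h : lagrangian r σ α κ χ p = lagrangian r σ α κ (profile r σ α κ) p) :
    χ p = profile r σ α κ p := by
  by_cases hlow : p ∈ lowEnergy r
  · simp only [lagrangian, profile, indicator_of_mem hlow] at h ⊢
    exact eq_max_rpow_of_potential_eq hσ _ (hχ.2.1 p) h
  · rw [profile, indicator_of_notMem hlow, hχ.2.2 p (not_lt.1 hlow)]

lemma Ffun_profile_eq_zero (hκ : energyMoment r σ α κ = r ^ 2 / Real.pi * a) :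
    Ffun r a (profile r σ α κ) = 0 :=
  sub_eq_zero.2 hκ

section Multiplier

variable (hr : r ≠ 0) (hσ : 0 < σ) (hκ : energyMoment r σ α κ = r ^ 2 / Real.pi * a)
  (hχ : χ ∈ XiSet r σ) (hF : Ffun r a χ = 0)
include hr hσ hκ hχ hF

lemma Hfun_profile_le : Hfun σ α (profile r σ α κ) ≤ Hfun σ α χ := by
  rw [Hfun_eq_integral_lagrangian_sub hr hσ κ hχ hF,
    Hfun_eq_integral_lagrangian_sub hr hσ κ (profile_mem_XiSet hr hσ κ)
      (Ffun_profile_eq_zero hκ)]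
  exact sub_le_sub_right (integral_mono (integrable_lagrangian hr hσ κ (profile_mem_XiSet hr hσ κ))
    (integrable_lagrangian hr hσ κ hχ) (lagrangian_profile_le hσ κ hχ)) _

lemma ae_eq_profile_of_Hfun_le (hle : Hfun σ α χ ≤ Hfun σ α (profile r σ α κ)) :
    χ =ᵐ[muHalf] profile r σ α κ := by
  have hprof := profile_mem_XiSet (α := α) hr hσ κ
  have hint_eq : ∫ p, lagrangian r σ α κ (profile r σ α κ) p ∂muHalf =
      ∫ p, lagrangian r σ α κ χ p ∂muHalf := by
    have := le_antisymm hle (Hfun_profile_le hr hσ hκ hχ hF)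
    rw [Hfun_eq_integral_lagrangian_sub hr hσ κ hχ hF,
      Hfun_eq_integral_lagrangian_sub hr hσ κ hprof
        (Ffun_profile_eq_zero hκ)] at this
    linarith
  filter_upwards [(integral_eq_iff_of_ae_le (integrable_lagrangian hr hσ κ hprof)
    (integrable_lagrangian hr hσ κ hχ)
    (Eventually.of_forall (lagrangian_profile_le hσ κ hχ))).1 hint_eq] with p hp
  exact eq_profile_of_lagrangian_eq hσ κ hχ hp.symm

end Multiplier

end Lagrangian

end ConstrainedMinimizer

open ConstrainedMinimizer

theorem stmt_16_general (r σ α a : ℝ) (hr : 0 < r) (hσ : σ ∈ Set.Ioo (0:ℝ) (3/2))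
    (ha : 0 < a) :
    ∃ χs ∈ XiSet r σ, Ffun r a χs = 0 ∧
      (∀ χ ∈ XiSet r σ, Ffun r a χ = 0 → Hfun σ α χs ≤ Hfun σ α χ) ∧
      (∀ χ ∈ XiSet r σ, Ffun r a χ = 0 →
        (∀ χ' ∈ XiSet r σ, Ffun r a χ' = 0 → Hfun σ α χ ≤ Hfun σ α χ') →
        χ =ᵐ[muHalf] χs) := by
  obtain ⟨hσ, -⟩ := hσ
  obtain ⟨κ, hκ⟩ := exists_energyMoment_eq (α := α) hr.ne' hσ
    (by positivity : 0 ≤ r ^ 2 / Real.pi * a)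
  have hprof := profile_mem_XiSet (α := α) hr.ne' hσ κ
  exact ⟨profile r σ α κ, hprof, Ffun_profile_eq_zero hκ,
    fun χ hχ hF => Hfun_profile_le hr.ne' hσ hκ hχ hF,
    fun χ hχ hF hmin => ae_eq_profile_of_Hfun_le hr.ne' hσ hκ hχ hF
      (hmin _ hprof (Ffun_profile_eq_zero hκ))⟩

/-- The infimum of `H` over `{χ ∈ Ξ_r : F(χ) = 0}` is attained, and the minimizer
is unique (as an element of `L^{1+1/σ}`, i.e. up to a.e. equality). -/
theorem stmt_16 (r σ α a : ℝ) (hr : 0 < r) (hσ : σ ∈ Set.Ioo (0:ℝ) (3/2))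
    (hα : 0 < α) (ha : 0 < a) :
    ∃ χs ∈ XiSet r σ, Ffun r a χs = 0 ∧
      (∀ χ ∈ XiSet r σ, Ffun r a χ = 0 → Hfun σ α χs ≤ Hfun σ α χ) ∧
      (∀ χ ∈ XiSet r σ, Ffun r a χ = 0 →
        (∀ χ' ∈ XiSet r σ, Ffun r a χ' = 0 → Hfun σ α χ ≤ Hfun σ α χ') →
        χ =ᵐ[muHalf] χs) :=
  stmt_16_general r σ α a hr hσ ha
end
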